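/- arXiv:1711.10325 — 10 statements merged into one kernel-verified Lean document; each statement's English description precedes it below -/
import Mathlib

section
/- The formal power series f(z) = Σ_{n≥0} (2·(3n+3)!/((n+2)!·(2n+3)!))·z^n satisfies the polynomial equation z⁴·f³ + 2z²(3z+1)·f² + (12z² − 10z + 1)·f + 8z − 1 = 0. -/
open Nat PowerSeries

noncomputable section

/-- fixpoint map: `y = PF14Phi y` iff `P(X,y)=0`. -/
def PF14Phi (y : ℚ⟦X⟧) : ℚ⟦X⟧ :=
  1 - 8*X + (10*X - 12*X^2)*y - (2*X^2*(3*X+1))*y^2 - X^4*y^3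

lemma PF14Phi_sub (y y' : ℚ⟦X⟧) : PF14Phi y - PF14Phi y' =
    X * (((10 - 12*X) - 2*X*(3*X+1)*(y+y') - X^3*(y^2+y*y'+y'^2)) * (y - y')) := by
  unfold PF14Phi; ring

lemma PF14coeff_Phi_congr {y y' : ℚ⟦X⟧} {n : ℕ}
    (h : ∀ k < n, coeff k y = coeff k y') :
    coeff n (PF14Phi y) = coeff n (PF14Phi y') := by
  have h0 : coeff n (PF14Phi y - PF14Phi y') = 0 := by
    rw [PF14Phi_sub]
    cases n with
    | zero => simp [coeff_zero_eq_constantCoeff]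
    | succ m =>
      rw [coeff_succ_X_mul, coeff_mul]
      apply Finset.sum_eq_zero
      intro p hp
      have hp2 : p.2 < m + 1 := lt_succ_of_le (le_of_add_le_right
        (Finset.HasAntidiagonal.mem_antidiagonal.mp hp).le)
      rw [show (coeff p.2) (y - y') = 0 by rw [map_sub, h p.2 hp2, sub_self], mul_zero]
  have := (map_sub (coeff n) (PF14Phi y) (PF14Phi y')).symm.trans h0
  linarith [sub_eq_zero.mp this]

def PF14G : ℕ → ℚ
  | n => coeff n (PF14Phi (mk fun k => if h : k < n then PF14G k else 0))
decreasing_by exact h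

def PF14g : ℚ⟦X⟧ := mk PF14G

lemma PF14g_fix : PF14g = PF14Phi PF14g := by
  ext n
  rw [PF14g, coeff_mk, PF14G]
  exact PF14coeff_Phi_congr fun k hk => by simp [PF14g, hk]

def PF14g1 : ℚ⟦X⟧ := d⁄dX ℚ PF14g
def PF14g2 : ℚ⟦X⟧ := d⁄dX ℚ PF14g1

lemma PF14D_ofNat (n : ℕ) [n.AtLeastTwo] :
    d⁄dX ℚ (no_index (OfNat.ofNat n) : ℚ⟦X⟧) = 0 := by
  rw [show (OfNat.ofNat n : ℚ⟦X⟧) = C (R := ℚ) (OfNat.ofNat n) from (map_ofNat (C (R := ℚ)) n).symm,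
    derivative_C]

lemma PF14E : X ^ 4 * PF14g ^ 3 + 2 * X ^ 2 * (3 * X + 1) * PF14g ^ 2 +
    (12 * X ^ 2 - 10 * X + 1) * PF14g + 8 * X - 1 = 0 := by
  have h := PF14g_fix
  rw [PF14Phi] at h
  linear_combination h

lemma PF14E1 :
    (4*X^3*PF14g^3 + 18*X^2*PF14g^2 + 4*X*PF14g^2 + 24*X*PF14g - 10*PF14g + 8)
    + (3*X^4*PF14g^2 + 12*X^3*PF14g + 4*X^2*PF14g + 12*X^2 - 10*X + 1) * PF14g1 = 0 := by
  have h0 : d⁄dX ℚ (X ^ 4 * PF14g ^ 3 + 2 * X ^ 2 * (3 * X + 1) * PF14g ^ 2 +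
      (12 * X ^ 2 - 10 * X + 1) * PF14g + 8 * X - 1) = 0 := by
    rw [PF14E]; simp
  rw [← h0]
  simp only [Derivation.leibniz, Derivation.leibniz_pow, derivative_X, PF14D_ofNat,
    map_add, map_sub, Derivation.map_one_eq_zero, smul_eq_mul, nsmul_eq_mul, PF14g1]
  push_cast
  ring

lemma PF14E2 :
    (12*X^2*PF14g^3 + 36*X*PF14g^2 + 4*PF14g^2 + 24*PF14g)
    + 2*(12*X^3*PF14g^2 + 36*X^2*PF14g + 8*X*PF14g + 24*X - 10)*PF14g1
    + (6*X^4*PF14g + 12*X^3 + 4*X^2)*PF14g1^2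
    + (3*X^4*PF14g^2 + 12*X^3*PF14g + 4*X^2*PF14g + 12*X^2 - 10*X + 1)*PF14g2 = 0 := by
  have h0 : d⁄dX ℚ ((4*X^3*PF14g^3 + 18*X^2*PF14g^2 + 4*X*PF14g^2 + 24*X*PF14g
      - 10*PF14g + 8)
      + (3*X^4*PF14g^2 + 12*X^3*PF14g + 4*X^2*PF14g + 12*X^2 - 10*X + 1) * PF14g1) = 0 := by
    rw [PF14E1]; simp
  rw [← h0]
  simp only [Derivation.leibniz, Derivation.leibniz_pow, derivative_X, PF14D_ofNat,
    map_add, map_sub, Derivation.map_one_eq_zero, smul_eq_mul, nsmul_eq_mul,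
    PF14g1, PF14g2]
  push_cast
  ring

lemma PF14cert :
    (3*X^4*PF14g^2 + 12*X^3*PF14g + 4*X^2*PF14g + 12*X^2 - 10*X + 1)^2 *
      ((4*X^2 - 27*X^3)*PF14g2 + (18*X - 108*X^2)*PF14g1 + (12 - 60*X)*PF14g - 12) = 0 := by
  linear_combination
    ((12 : ℚ⟦X⟧) + (-176 : ℚ⟦X⟧)*X^2 + (-16 : ℚ⟦X⟧)*X^2*PF14g + (-28 : ℚ⟦X⟧)*X^3*PF14g1 + (-392 : ℚ⟦X⟧)*X^3*PF14g + (-288 : ℚ⟦X⟧)*X^4*PF14g1 + (-44 : ℚ⟦X⟧)*X^4*PF14g^2 + (-36 : ℚ⟦X⟧)*X^5*PF14g*PF14g1) *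
      PF14E +
    ((18 : ℚ⟦X⟧)*X^1 + (-208 : ℚ⟦X⟧)*X^2 + (536 : ℚ⟦X⟧)*X^3 + (36 : ℚ⟦X⟧)*X^3*PF14g + (-216 : ℚ⟦X⟧)*X^4 + (-16 : ℚ⟦X⟧)*X^4*PF14g1 + (56 : ℚ⟦X⟧)*X^4*PF14g + (60 : ℚ⟦X⟧)*X^5*PF14g1 + (108 : ℚ⟦X⟧)*X^5*PF14g + (2 : ℚ⟦X⟧)*X^5*PF14g^2 + (324 : ℚ⟦X⟧)*X^6*PF14g1 + (-24 : ℚ⟦X⟧)*X^6*PF14g*PF14g1 + (108 : ℚ⟦X⟧)*X^6*PF14g^2 + (162 : ℚ⟦X⟧)*X^7*PF14g*PF14g1) *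
      PF14E1 +
    ((4 : ℚ⟦X⟧)*X^2 + (-67 : ℚ⟦X⟧)*X^3 + (318 : ℚ⟦X⟧)*X^4 + (16 : ℚ⟦X⟧)*X^4*PF14g + (-324 : ℚ⟦X⟧)*X^5 + (-60 : ℚ⟦X⟧)*X^5*PF14g + (-324 : ℚ⟦X⟧)*X^6*PF14g + (12 : ℚ⟦X⟧)*X^6*PF14g^2 + (-81 : ℚ⟦X⟧)*X^7*PF14g^2) *
      PF14E2

lemma PF14G_zero : PF14G 0 = 1 := by
  rw [PF14G]
  simp [PF14Phi, coeff_zero_eq_constantCoeff]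

lemma PF14Py_ne : (3*X^4*PF14g^2 + 12*X^3*PF14g + 4*X^2*PF14g + 12*X^2 - 10*X + 1 : ℚ⟦X⟧) ≠ 0 := by
  intro h
  have := congrArg (constantCoeff (R := ℚ)) h
  simp [map_add, map_sub, map_mul, map_pow, constantCoeff_X] at this

lemma PF14L : ((4*X^2 - 27*X^3)*PF14g2 + (18*X - 108*X^2)*PF14g1
    + (12 - 60*X)*PF14g - 12 : ℚ⟦X⟧) = 0 := by
  rcases mul_eq_zero.mp PF14cert with h | h
  · exact absurd (pow_eq_zero_iff (by norm_num)|>.mp h) PF14Py_ne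
  · exact h

lemma PF14W : ∀ k, coeff k ((4:ℚ⟦X⟧)*(X^2*PF14g2) - 27*(X^3*PF14g2) + 18*(X^1*PF14g1)
    - 108*(X^2*PF14g1) + 12*PF14g - 60*(X^1*PF14g) - 12) = 0 := by
  intro k
  rw [show ((4:ℚ⟦X⟧)*(X^2*PF14g2) - 27*(X^3*PF14g2) + 18*(X^1*PF14g1)
    - 108*(X^2*PF14g1) + 12*PF14g - 60*(X^1*PF14g) - 12)
    = ((4*X^2 - 27*X^3)*PF14g2 + (18*X - 108*X^2)*PF14g1 + (12 - 60*X)*PF14g - 12) by ring,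
    PF14L]
  exact map_zero _

lemma PF14coeff_ofNat_mul (m n : ℕ) [m.AtLeastTwo] (h : ℚ⟦X⟧) :
    coeff n ((no_index (OfNat.ofNat m) : ℚ⟦X⟧) * h) = (OfNat.ofNat m : ℚ) * coeff n h := by
  rw [← map_ofNat (C (R := ℚ)) m, coeff_C_mul]

lemma PF14coeff_ofNat (m n : ℕ) [m.AtLeastTwo] :
    coeff n (no_index (OfNat.ofNat m) : ℚ⟦X⟧) = if n = 0 then (OfNat.ofNat m : ℚ) else 0 := by
  rw [← map_ofNat (C (R := ℚ)) m, coeff_C]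

lemma PF14cg (k : ℕ) : coeff k PF14g = PF14G k := by rw [PF14g, coeff_mk]

lemma PF14cg1 (k : ℕ) : coeff k PF14g1 = PF14G (k+1) * (k+1) := by
  rw [PF14g1, coeff_derivative, PF14cg]

lemma PF14cg2 (k : ℕ) : coeff k PF14g2 = PF14G (k+2) * ((k+2) * (k+1)) := by
  rw [PF14g2, coeff_derivative, PF14cg1]
  push_cast
  ring

lemma PF14Xpow (h : ℚ⟦X⟧) {d n m : ℕ} (e : n = m + d) :
    coeff n (X^d * h) = coeff m h := by
  subst e; rw [coeff_X_pow_mul]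

lemma PF14Xpow0 (h : ℚ⟦X⟧) {d n : ℕ} (e : n < d) :
    coeff n (X^d * h) = 0 := by
  rw [coeff_X_pow_mul', if_neg (by omega)]

lemma PF14G_one : PF14G 1 = 2 := by
  have h := PF14W 1
  simp only [map_add, map_sub, PF14coeff_ofNat_mul, PF14coeff_ofNat,
    PF14Xpow0 PF14g2 (show (1:ℕ) < 2 by norm_num),
    PF14Xpow0 PF14g2 (show (1:ℕ) < 3 by norm_num),
    PF14Xpow PF14g1 (show (1:ℕ) = 0 + 1 by norm_num),
    PF14Xpow0 PF14g1 (show (1:ℕ) < 2 by norm_num),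
    PF14Xpow PF14g (show (1:ℕ) = 0 + 1 by norm_num),
    PF14cg, PF14cg1] at h
  norm_num [PF14G_zero] at h
  linarith

lemma PF14G_two : PF14G 2 = 6 := by
  have h := PF14W 2
  simp only [map_add, map_sub, PF14coeff_ofNat_mul, PF14coeff_ofNat,
    PF14Xpow PF14g2 (show (2:ℕ) = 0 + 2 by norm_num),
    PF14Xpow0 PF14g2 (show (2:ℕ) < 3 by norm_num),
    PF14Xpow PF14g1 (show (2:ℕ) = 1 + 1 by norm_num),
    PF14Xpow PF14g1 (show (2:ℕ) = 0 + 2 by norm_num),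
    PF14Xpow PF14g (show (2:ℕ) = 1 + 1 by norm_num),
    PF14cg, PF14cg1, PF14cg2] at h
  norm_num [PF14G_one] at h
  linarith

lemma PF14Grec (n : ℕ) : 2*(2*(n:ℚ)+9)*((n:ℚ)+5) * PF14G (n+3)
    = 3*(3*(n:ℚ)+10)*(3*(n:ℚ)+11) * PF14G (n+2) := by
  have h := PF14W (n+3)
  simp only [map_add, map_sub, PF14coeff_ofNat_mul, PF14coeff_ofNat,
    PF14Xpow PF14g2 (show n+3 = (n+1) + 2 by omega),
    PF14Xpow PF14g2 (show n+3 = n + 3 by omega),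
    PF14Xpow PF14g1 (show n+3 = (n+2) + 1 by omega),
    PF14Xpow PF14g1 (show n+3 = (n+1) + 2 by omega),
    PF14Xpow PF14g (show n+3 = (n+2) + 1 by omega),
    PF14cg, PF14cg1, PF14cg2] at h
  simp only [show n+1+2 = n+3 by omega, show n+2+1 = n+3 by omega,
    show n+1+1 = n+2 by omega] at h
  rw [if_neg (show ¬(n + 3 = 0) by omega)] at h
  push_cast at h
  linear_combination h

def PF14A : ℕ → ℚ := fun n => (2 * (3 * n + 3)! : ℚ) / ((n + 2)! * (2 * n + 3)!)

lemma PF14A_rec (m : ℕ) : 2*(2*(m:ℚ)+5)*((m:ℚ)+3) * PF14A (m+1)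
    = 3*(3*(m:ℚ)+4)*(3*(m:ℚ)+5) * PF14A m := by
  unfold PF14A
  rw [show 3*(m+1)+3 = 3*m+3+1+1+1 by omega, show m+1+2 = m+2+1 by omega,
    show 2*(m+1)+3 = 2*m+3+1+1 by omega]
  simp only [factorial_succ]
  have nz1 : ((3*m+3)! : ℚ) ≠ 0 := Nat.cast_ne_zero.mpr (factorial_ne_zero _)
  have nz2 : ((m+2)! : ℚ) ≠ 0 := Nat.cast_ne_zero.mpr (factorial_ne_zero _)
  have nz3 : ((2*m+3)! : ℚ) ≠ 0 := Nat.cast_ne_zero.mpr (factorial_ne_zero _)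
  have h1 : ((m:ℚ)+3) ≠ 0 := by positivity
  have h2 : (2*(m:ℚ)+5) ≠ 0 := by positivity
  have h3 : (2*(m:ℚ)+4) ≠ 0 := by positivity
  push_cast
  field_simp
  ring

lemma PF14A_zero : PF14A 0 = 1 := by norm_num [PF14A, factorial]
lemma PF14A_one : PF14A 1 = 2 := by norm_num [PF14A, factorial]
lemma PF14A_two : PF14A 2 = 6 := by norm_num [PF14A, factorial]

lemma PF14G_eq_A (n : ℕ) : PF14G n = PF14A n := by
  induction n using Nat.strong_induction_on with
  | _ n ih =>
    match n with
    | 0 => rw [PF14G_zero, PF14A_zero]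
    | 1 => rw [PF14G_one, PF14A_one]
    | 2 => rw [PF14G_two, PF14A_two]
    | (m+3) =>
      have h1 := PF14Grec m
      have h2 := PF14A_rec (m+2)
      have hih : PF14G (m+2) = PF14A (m+2) := ih (m+2) (by omega)
      have hne : (2*(2*(m:ℚ)+9)*((m:ℚ)+5)) ≠ 0 := by positivity
      apply mul_left_cancel₀ hne
      rw [hih] at h1
      rw [show m+2+1 = m+3 by omega] at h2
      push_cast at h2
      linear_combination h1 - h2

end

theorem stmt_4 :
    let f : PowerSeries ℚ :=
      PowerSeries.mk fun n => (2 * (3 * n + 3)! : ℚ) / ((n + 2)! * (2 * n + 3)!)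
    X ^ 4 * f ^ 3 + 2 * X ^ 2 * (3 * X + 1) * f ^ 2 +
      (12 * X ^ 2 - 10 * X + 1) * f + 8 * X - 1 = 0 := by
  intro f
  have hf : f = PF14g := by
    have : f = PowerSeries.mk PF14A := rfl
    rw [this]
    ext n
    rw [coeff_mk, PF14g, coeff_mk, PF14G_eq_A]
  rw [hf]
  exact PF14E
end

section
/- The formal power series g(z) = Σ_{n≥1} (5·(3n+1)!/((n−1)!·(2n+3)!))·z^n satisfies z³·g³ + 5z²·g² + (5z − 1)·g + z = 0. -/
open Nat PowerSeries

/-!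
Let `T = 1 + X T³` be the generating function of ternary trees. Modulo `X T³ = T - 1` the cubic
evaluated at `g = X T⁵` collapses to the binomial expansion of `T⁵`, so it vanishes, and it remains
to see that `g` has the stated coefficients. Take candidate series `Q s` whose coefficients are the
Lagrange-inversion values `[Xⁿ] T^s = s / (3n + s) · C(3n + s, n)`. A factorial identity gives
`Q 0 = 1` and `Q (s + 1) = Q s + X Q (s + 3)`. This recurrence determines the family from `Q 0`
coefficient by coefficient, and both `s ↦ Q (s + t)` and `s ↦ Q s * Q t` satisfy it, so
`Q s = (Q 1)^s`; in particular `Q 1 = 1 + X (Q 1)³`.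
-/

namespace PowerSeries

variable {R : Type*}

theorem eq_of_succ_eq_add_X_mul [Semiring R] {k : ℕ} {F G : ℕ → R⟦X⟧}
    (hF : ∀ s, F (s + 1) = F s + X * F (s + k)) (hG : ∀ s, G (s + 1) = G s + X * G (s + k))
    (h0 : F 0 = G 0) : F = G := by
  suffices h : ∀ n s, coeff n (F s) = coeff n (G s) from funext fun s => ext fun n => h n s
  intro n
  induction n with
  | zero =>
    intro s
    induction s with
    | zero => rw [h0]
    | succ s ih => simp only [hF, hG, map_add, ih, coeff_zero_X_mul]
  | succ n ihn =>
    intro s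
    induction s with
    | zero => rw [h0]
    | succ s ih => simp only [hF, hG, map_add, ih, coeff_succ_X_mul, ihn]

theorem eq_pow_of_succ_eq_add_X_mul [CommSemiring R] {k : ℕ} {Q : ℕ → R⟦X⟧}
    (hQ : ∀ s, Q (s + 1) = Q s + X * Q (s + k)) (h0 : Q 0 = 1) (s : ℕ) : Q s = Q 1 ^ s := by
  have hmul (t : ℕ) : (fun s => Q (s + t)) = fun s => Q s * Q t := by
    refine eq_of_succ_eq_add_X_mul (k := k) (fun s => ?_) (fun s => ?_) (by simp [h0])
    · rw [add_right_comm s 1 t, hQ, add_right_comm]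
    · rw [hQ]; ring
  induction s with
  | zero => rw [h0, pow_zero]
  | succ s ih => rw [congrFun (hmul 1) s, ih, pow_succ]

end PowerSeries

theorem cubic_of_eq_one_add_mul_pow_three {R : Type*} [CommRing R] {x t : R}
    (ht : t = 1 + x * t ^ 3) :
    x ^ 3 * (x * t ^ 5) ^ 3 + 5 * x ^ 2 * (x * t ^ 5) ^ 2 + (5 * x - 1) * (x * t ^ 5) + x = 0 := by
  -- the cofactor of `t - 1 - x t³` comes from `a⁵ - b⁵`, `a³ - b³`, `a - b` with `a = x t³`, `b = t - 1`
  linear_combination (-(x * ((x * t ^ 3) ^ 4 + (x * t ^ 3) ^ 3 * (t - 1) + (x * t ^ 3) ^ 2 * (t - 1) ^ 2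
    + x * t ^ 3 * (t - 1) ^ 3 + (t - 1) ^ 4) + 5 * x * t * ((x * t ^ 3) ^ 2 + x * t ^ 3 * (t - 1)
    + (t - 1) ^ 2) + 5 * x * t ^ 2)) * ht

/-- `ternaryCoeff s n = [Xⁿ] T^(s+1)`; the shift avoids the junk value of the closed form at
`s = n = 0`. -/
def ternaryCoeff (s n : ℕ) : ℚ := (s + 1) * (3 * n + s)! / (n ! * (2 * n + s + 1)!)

noncomputable def ternaryPow : ℕ → ℚ⟦X⟧
  | 0 => 1
  | s + 1 => mk (ternaryCoeff s)

theorem ternaryCoeff_zero_right (s : ℕ) : ternaryCoeff s 0 = 1 := by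
  have : ((s + 1 : ℕ)! : ℚ) ≠ 0 := by positivity
  simp only [ternaryCoeff, mul_zero, zero_add, factorial_zero, cast_one, one_mul]
  rw [factorial_succ]; push_cast; field_simp

theorem ternaryCoeff_zero_succ (n : ℕ) : ternaryCoeff 0 (n + 1) = ternaryCoeff 2 n := by
  simp only [ternaryCoeff]
  rw [show 3 * (n + 1) + 0 = (3 * n + 2) + 1 by ring, show 2 * (n + 1) + 0 + 1 = 2 * n + 2 + 1 by ring,
    factorial_succ (3 * n + 2), factorial_succ n]
  have : (n ! : ℚ) ≠ 0 := by positivity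
  have : ((2 * n + 2 + 1)! : ℚ) ≠ 0 := by positivity
  push_cast
  field_simp
  ring

theorem ternaryCoeff_succ_succ (s n : ℕ) :
    ternaryCoeff (s + 1) (n + 1) = ternaryCoeff s (n + 1) + ternaryCoeff (s + 3) n := by
  simp only [ternaryCoeff]
  rw [show 3 * (n + 1) + (s + 1) = (3 * n + s + 3) + 1 by ring, show 3 * (n + 1) + s = 3 * n + s + 3 by ring,
    show 3 * n + (s + 3) = 3 * n + s + 3 by ring,
    show 2 * (n + 1) + (s + 1) + 1 = (2 * n + s + 3) + 1 by ring,
    show 2 * (n + 1) + s + 1 = 2 * n + s + 3 by ring, show 2 * n + (s + 3) + 1 = (2 * n + s + 3) + 1 by ring,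
    factorial_succ (3 * n + s + 3), factorial_succ (2 * n + s + 3), factorial_succ n]
  have : (n ! : ℚ) ≠ 0 := by positivity
  have : ((2 * n + s + 3)! : ℚ) ≠ 0 := by positivity
  push_cast
  field_simp
  ring

theorem ternaryPow_succ (s : ℕ) : ternaryPow (s + 1) = ternaryPow s + X * ternaryPow (s + 3) := by
  ext (_ | n)
  · cases s <;> simp [ternaryPow, ternaryCoeff_zero_right]
  · cases s <;> simp [ternaryPow, coeff_succ_X_mul, ternaryCoeff_zero_succ, ternaryCoeff_succ_succ]

theorem stmt_5 :
    let g : PowerSeries ℚ :=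
      PowerSeries.mk fun n =>
        if n = 0 then 0 else (5 * (3 * n + 1)! : ℚ) / ((n - 1)! * (2 * n + 3)!)
    X ^ 3 * g ^ 3 + 5 * X ^ 2 * g ^ 2 + (5 * X - 1) * g + X = 0 := by
  intro g
  have hpow := eq_pow_of_succ_eq_add_X_mul ternaryPow_succ rfl
  have hT : ternaryPow 1 = 1 + X * ternaryPow 1 ^ 3 := by
    rw [← hpow 3]
    exact ternaryPow_succ 0
  have hg : g = X * ternaryPow 1 ^ 5 := by
    rw [← hpow 5]
    ext (_ | n)
    · simp [g]
    · simp [g, ternaryPow, coeff_succ_X_mul, ternaryCoeff]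
      ring_nf
  rw [hg]
  exact cubic_of_eq_one_add_mul_pow_three hT
end

section
/- The formal power series h(z) = Σ_{n≥3} (10·(3n)!/((n−3)!·(2n+4)!))·z^n satisfies z⁴·h³ − (15z + 2)·z²·h² − (10z³ − 25z² + 10z − 1)·h − z³ = 0. -/
open Nat PowerSeries

noncomputable def Tit : ℕ → PowerSeries ℚ
  | 0 => 1
  | (k+1) => 1 + X * (Tit k)^3

noncomputable def Bb : PowerSeries ℚ := PowerSeries.mk fun n => coeff n (Tit n)

lemma Tstep (k : ℕ) : (X : PowerSeries ℚ)^(k+1) ∣ Tit (k+1) - Tit k := by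
  induction k with
  | zero =>
    simp [Tit]
  | succ k ih =>
    obtain ⟨c, hc⟩ := ih
    refine ⟨c * ((Tit (k+1))^2 + Tit (k+1) * Tit k + (Tit k)^2), ?_⟩
    have : Tit (k+2) = 1 + X * (Tit (k+1))^3 := rfl
    rw [this, show Tit (k+1) = 1 + X * (Tit k)^3 from rfl] at *
    linear_combination (X * ((1 + X * (Tit k)^3)^2 + (1 + X * (Tit k)^3) * Tit k + (Tit k)^2)) * hc

lemma Tstab {j k : ℕ} (h : j ≤ k) : coeff j (Tit k) = coeff j (Tit j) := by
  induction k with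
  | zero =>
    have : j = 0 := by omega
    rw [this]
  | succ k ih =>
    rcases Nat.lt_or_ge j (k+1) with hj | hj
    · have hjk : j ≤ k := by omega
      have hz : coeff j (Tit (k+1) - Tit k) = 0 :=
        PowerSeries.X_pow_dvd_iff.mp (Tstep k) j (by omega)
      have h2 : coeff j (Tit (k+1)) = coeff j (Tit k) := by
        rw [map_sub] at hz; linarith
      rw [h2]; exact ih hjk
    · have : j = k+1 := by omega
      rw [this]

lemma coeffBb {j k : ℕ} (h : j ≤ k) : coeff j Bb = coeff j (Tit k) := by
  rw [Bb, coeff_mk, Tstab h]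

lemma Bdvd (k : ℕ) : (X : PowerSeries ℚ)^(k+1) ∣ Bb - Tit k := by
  rw [PowerSeries.X_pow_dvd_iff]
  intro m hm
  rw [map_sub, coeffBb (by omega : m ≤ k), sub_self]

lemma hBrel : Bb = 1 + X * Bb^3 := by
  ext n
  have key : (X : PowerSeries ℚ)^(n+1) ∣ Bb - (1 + X * Bb^3) := by
    obtain ⟨a, ha⟩ := Bdvd (n+1)
    obtain ⟨b, hb⟩ := Bdvd n
    refine ⟨X * a - X * (Bb^2 + Bb * Tit n + (Tit n)^2) * b, ?_⟩
    rw [show Tit (n+1) = 1 + X * (Tit n)^3 from rfl] at ha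
    linear_combination ha - X * (Bb^2 + Bb * Tit n + (Tit n)^2) * hb
  have := PowerSeries.X_pow_dvd_iff.mp key n (by omega)
  rw [map_sub] at this
  linarith

lemma hpow (r : ℕ) : Bb^(r+1) = Bb^r + X * Bb^(r+3) := by
  linear_combination (Bb^r) * hBrel

noncomputable def Fc : ℕ → ℕ → ℚ
  | 0, m => if m = 0 then 1 else 0
  | (s+1), m => (s+1) * (3*m+s)! / (m ! * (2*m+s+1)!)

lemma Fkey (s m : ℕ) : Fc (s+1) (m+1) = Fc s (m+1) + Fc (s+3) m := by
  match s with
  | 0 =>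
    simp only [Fc, if_neg (show ¬(m+1=0) by omega)]
    have e1 : 3*(m+1)+0 = (3*m+2)+1 := by ring
    have e2 : 2*(m+1)+0+1 = 2*m+2+1 := by ring
    rw [e1, e2, factorial_succ, factorial_succ (m)]
    have h1 : ((3*m+2)! : ℚ) ≠ 0 := by exact_mod_cast (3*m+2).factorial_ne_zero
    have h2 : ((2*m+2+1)! : ℚ) ≠ 0 := by exact_mod_cast (2*m+2+1).factorial_ne_zero
    have h3 : ((m)! : ℚ) ≠ 0 := by exact_mod_cast (m).factorial_ne_zero
    push_cast
    field_simp
    ring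
  | (t+1) =>
    simp only [Fc]
    have e1 : 3*(m+1)+(t+1) = (3*m+t+3)+1 := by ring
    have e2 : 2*(m+1)+(t+1)+1 = (2*m+t+3)+1 := by ring
    have e3 : 3*(m+1)+t = 3*m+t+3 := by ring
    have e4 : 2*(m+1)+t+1 = 2*m+t+3 := by ring
    have e5 : 3*m+(t+3) = 3*m+t+3 := by ring
    have e6 : 2*m+(t+3)+1 = (2*m+t+3)+1 := by ring
    rw [e1, e2, e3, e4, e5, e6, factorial_succ (3*m+t+3), factorial_succ (2*m+t+3),
      factorial_succ m]
    have h1 : ((3*m+t+3)! : ℚ) ≠ 0 := by exact_mod_cast (3*m+t+3).factorial_ne_zero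
    have h2 : ((2*m+t+3)! : ℚ) ≠ 0 := by exact_mod_cast (2*m+t+3).factorial_ne_zero
    have h3 : ((m)! : ℚ) ≠ 0 := by exact_mod_cast (m).factorial_ne_zero
    push_cast
    field_simp
    ring

lemma coeff_pow : ∀ m r, coeff m (Bb^r) = Fc r m := by
  intro m
  induction m using Nat.strong_induction_on with
  | _ m ih =>
    match m with
    | 0 =>
      intro r
      match r with
      | 0 => simp [Fc]
      | (s+1) =>
        have hc : constantCoeff Bb = 1 := by
          have : coeff 0 Bb = coeff 0 (Tit 0) := coeffBb (le_refl 0)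
          simpa [Tit, ← PowerSeries.coeff_zero_eq_constantCoeff] using this
        rw [← PowerSeries.coeff_zero_eq_constantCoeff] at hc
        have : coeff 0 (Bb^(s+1)) = 1 := by
          rw [PowerSeries.coeff_zero_eq_constantCoeff, map_pow]
          rw [PowerSeries.coeff_zero_eq_constantCoeff] at hc
          rw [hc, one_pow]
        rw [this]
        simp only [Fc]
        rw [factorial_succ]
        have h3 : ((s)! : ℚ) ≠ 0 := by exact_mod_cast (s).factorial_ne_zero
        push_cast
        field_simp
        simp
    | (m'+1) =>
      intro r
      induction r with
      | zero => simp [Fc]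
      | succ s ihr =>
        rw [hpow s, map_add, PowerSeries.coeff_succ_X_mul, ihr, ih m' (by omega), Fkey]

lemma hmain : (PowerSeries.mk fun n =>
      if n < 3 then (0:ℚ) else (10 * (3 * n)! : ℚ) / ((n - 3)! * (2 * n + 4)!)) =
    X^3 * Bb^10 := by
  ext n
  rw [coeff_mk, PowerSeries.coeff_X_pow_mul']
  rcases Nat.lt_or_ge n 3 with hn | hn
  · rw [if_pos hn, if_neg (by omega)]
  · obtain ⟨m, rfl⟩ : ∃ m, n = m + 3 := ⟨n - 3, by omega⟩
    rw [if_neg (by omega), if_pos (by omega), show m+3-3 = m from by omega, coeff_pow]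
    simp only [Fc]
    norm_num
    rw [show 2*(m+3)+4 = 2*m+9+1 from by ring, show 3*(m+3) = 3*m+9 from by ring]

theorem stmt_6 :
    let h : PowerSeries ℚ :=
      PowerSeries.mk fun n =>
        if n < 3 then 0 else (10 * (3 * n)! : ℚ) / ((n - 3)! * (2 * n + 4)!)
    X ^ 4 * h ^ 3 - (15 * X + 2) * X ^ 2 * h ^ 2 -
      (10 * X ^ 3 - 25 * X ^ 2 + 10 * X - 1) * h - X ^ 3 = 0 := by
  intro h
  have hh : h = X^3 * Bb^10 := hmain
  rw [hh]
  linear_combination (1*X^3 + 1*X^3*Bb^1 + 1*X^3*Bb^2 + 1*X^3*Bb^3 + 1*X^3*Bb^4 + 1*X^3*Bb^5 + 1*X^3*Bb^6 + 1*X^3*Bb^7 + 1*X^3*Bb^8 + 1*X^3*Bb^9 - 1*X^4*Bb^3 - 2*X^4*Bb^4 - 3*X^4*Bb^5 - 4*X^4*Bb^6 - 5*X^4*Bb^7 - 6*X^4*Bb^8 - 7*X^4*Bb^9 + 2*X^4*Bb^10 + 1*X^4*Bb^11 + 1*X^5*Bb^6 + 3*X^5*Bb^7 + 6*X^5*Bb^8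 + 10*X^5*Bb^9 - 10*X^5*Bb^10 - 4*X^5*Bb^11 + 3*X^5*Bb^12 + 1*X^5*Bb^13 - 1*X^6*Bb^9 + 6*X^6*Bb^10 - 10*X^6*Bb^12 + 4*X^6*Bb^14 + 1*X^6*Bb^15 + 1*X^7*Bb^12 - 5*X^7*Bb^13 - 5*X^7*Bb^14 + 5*X^7*Bb^15 + 5*X^7*Bb^16 + 1*X^7*Bb^17 - 1*X^8*Bb^15 + 4*X^8*Bb^16 + 9*X^8*Bb^17 + 4*X^8*Bb^18 - 1*X^8*Bb^19 + 1*X^9*Bb^18 - 3*X^9*Bb^19 + 3*X^9*Bb^20 - 1*X^9*Bb^21 - 1*X^10*Bb^21 + 2*X^10*Bb^22 - 1*X^10*Bb^23 + 1*X^11*Bb^24 - 1*X^11*Bb^25 - 1*X^12*Bb^27) * hBrel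
end

section
/- Let a and b be nonnegative integers with a > b, and let i, j, k be nonnegative integers with i < j ≤ k. Then binom(a+i, i)·binom(b+j, j) ≤ binom(b+i, i)·binom(a+j, j). -/
/-!
Put `F m n = (m + n).choose n`. The claim says that `n ↦ F a n / F b n` is nondecreasing. From
`(m + n + 1) * F m n = F m (n + 1) * (n + 1)` the ratio of consecutive quotients is
`(a + n + 1) / (b + n + 1) ≥ 1`, and a sequence of cross-multiplied one-step inequalities between
positive sequences chains to all `i ≤ j`.
-/

theorem cross_mul_le_cross_mul_of_le {R : Type*} [CommSemiring R] [LinearOrder R]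
    [IsStrictOrderedRing R] {f g : ℕ → R} (hf : ∀ n, 0 < f n) (hg : ∀ n, 0 < g n)
    (hstep : ∀ n, f n * g (n + 1) ≤ g n * f (n + 1)) {i j : ℕ} (hij : i ≤ j) :
    f i * g j ≤ g i * f j := by
  induction j, hij using Nat.le_induction with
  | base => rw [mul_comm]
  | succ n _ ih =>
    refine le_of_mul_le_mul_right ?_ (mul_pos (hf n) (hg n))
    calc f i * g (n + 1) * (f n * g n)
        = f i * g n * (f n * g (n + 1)) := by ring
      _ ≤ g i * f n * (g n * f (n + 1)) :=
          mul_le_mul ih (hstep n) (mul_pos (hf n) (hg _)).le (mul_pos (hg i) (hf n)).le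
      _ = g i * f (n + 1) * (f n * g n) := by ring

theorem Nat.choose_add_mul_choose_add_succ_le {a b : ℕ} (hab : b ≤ a) (n : ℕ) :
    (a + n).choose n * (b + (n + 1)).choose (n + 1) ≤
      (b + n).choose n * (a + (n + 1)).choose (n + 1) := by
  refine Nat.le_of_mul_le_mul_right ?_ n.succ_pos
  have hA := Nat.add_one_mul_choose_eq (a + n) n
  have hB := Nat.add_one_mul_choose_eq (b + n) n
  rw [← add_assoc, ← add_assoc]
  calc (a + n).choose n * (b + n + 1).choose (n + 1) * (n + 1)
      = (a + n).choose n * (b + n).choose n * (b + n + 1) := by rw [mul_assoc, ← hB]; ring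
    _ ≤ (a + n).choose n * (b + n).choose n * (a + n + 1) := by gcongr
    _ = (b + n).choose n * (a + n + 1).choose (n + 1) * (n + 1) := by
        rw [mul_assoc _ _ (n + 1), ← hA]; ring

theorem stmt_8_general (a b i j : ℕ) (hab : b < a) (hij : i < j) :
    (a + i).choose i * (b + j).choose j ≤ (b + i).choose i * (a + j).choose j :=
  cross_mul_le_cross_mul_of_le (fun n ↦ Nat.choose_pos (Nat.le_add_left n a))
    (fun n ↦ Nat.choose_pos (Nat.le_add_left n b))
    (Nat.choose_add_mul_choose_add_succ_le hab.le) hij.le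

theorem stmt_8 (a b i j k : ℕ) (hab : b < a) (hij : i < j) (hjk : j ≤ k) :
    (a + i).choose i * (b + j).choose j ≤ (b + i).choose i * (a + j).choose j :=
  stmt_8_general a b i j hab hij
end

section
/- Let (a_n)_{n≥0} be a sequence of nonnegative real numbers that is log-convex, i.e., a_i·a_{j+1} ≥ a_{i+1}·a_j for all 0 ≤ i < j. Then for all integers a > b ≥ 0 and all k ≥ 0: Σ_{j=0}^{k} binom(a+1+j, j)·a_j·binom(b+k−j, k−j)·a_{k−j} ≥ Σ_{j=0}^{k} binom(a+j, j)·a_j·binom(b+1+k−j, k−j)·a_{k−j}. -/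
/-!
For `i + j = k` the coefficient of `x i * x j` in the difference of the two sides is
`C(a+1+i, i) C(b+j, j) - C(a+i, i) C(b+1+j, j)`. Since `C(c+1+i, i) = ∑_{l ≤ i} C(c+l, l)`,
summation by parts along the antidiagonal rewrites the difference as
`∑_{i+j=k-1} w i j (x (i+1) x j - x i x (j+1))` with `w i j = C(a+1+i, i) C(b+1+j, j)`.
The bracket is antisymmetric in `(i, j)` and, by log-convexity, nonpositive for `i ≤ j`, while
`b ≤ a` gives `w i j ≤ w j i` for `i ≤ j`; so the terms at `(i, j)` and `(j, i)` add up to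
something nonnegative.
-/

open Finset

theorem Nat.choose_mul_choose_le_choose_mul_choose {a b i j : ℕ} (hba : b ≤ a) (hij : i ≤ j) :
    (a + i).choose i * (b + j).choose j ≤ (a + j).choose j * (b + i).choose i := by
  induction j, hij using Nat.le_induction with
  | base => rw [mul_comm]
  | succ j _ ih =>
    -- `(c + j + 1).choose (j + 1) * (j + 1) = (c + j + 1) * (c + j).choose j`, and `b ≤ a`
    refine Nat.le_of_mul_le_mul_right ?_ j.succ_pos
    calc (a + i).choose i * (b + (j + 1)).choose (j + 1) * (j + 1)
        = (a + i).choose i * ((b + j + 1).choose (j + 1) * (j + 1)) := by rw [← add_assoc]; ring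
      _ = (b + j + 1) * ((a + i).choose i * (b + j).choose j) := by
          rw [← Nat.add_one_mul_choose_eq]; ring
      _ ≤ (a + j + 1) * ((a + j).choose j * (b + i).choose i) :=
          Nat.mul_le_mul (by omega) ih
      _ = (a + (j + 1)).choose (j + 1) * (b + i).choose i * (j + 1) := by
          rw [← add_assoc, mul_right_comm, ← Nat.add_one_mul_choose_eq]; ring

theorem Nat.sum_range_add_choose_self (a i : ℕ) :
    ∑ l ∈ range (i + 1), (a + l).choose l = (a + 1 + i).choose i := by
  induction i with
  | zero => simp
  | succ i ih =>
    rw [sum_range_succ, ih, show a + 1 + (i + 1) = a + 1 + i + 1 by omega, Nat.choose_succ_succ,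
      show a + (i + 1) = a + 1 + i by omega]

namespace Finset.Nat

theorem sum_antidiagonal_succ_by_parts {R : Type*} [CommRing R] {f g F G : ℕ → R}
    (hF : ∀ i, F i = ∑ l ∈ range (i + 1), f l) (hG : ∀ j, G j = ∑ l ∈ range (j + 1), g l)
    (p : ℕ → ℕ → R) (k : ℕ) :
    ∑ q ∈ antidiagonal (k + 1), (F q.1 * g q.2 - f q.1 * G q.2) * p q.1 q.2 =
      ∑ q ∈ antidiagonal k, F q.1 * G q.2 * (p (q.1 + 1) q.2 - p q.1 (q.2 + 1)) := by
  -- with `F' i = ∑ l < i, f l` one has `f = F - F'`, and `F'` is `F` shifted by one with `F' 0 = 0`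
  set F' : ℕ → R := fun i => ∑ l ∈ range i, f l
  set G' : ℕ → R := fun j => ∑ l ∈ range j, g l
  have hf : ∀ i, f i = F i - F' i := fun i => by simp [F', hF, sum_range_succ]
  have hg : ∀ j, g j = G j - G' j := fun j => by simp [G', hG, sum_range_succ]
  have hF'0 : F' 0 = 0 := sum_range_zero f
  have hG'0 : G' 0 = 0 := sum_range_zero g
  have hF' : ∀ i, F' (i + 1) = F i := fun i => (hF i).symm
  have hG' : ∀ j, G' (j + 1) = G j := fun j => (hG j).symm
  calc ∑ q ∈ antidiagonal (k + 1), (F q.1 * g q.2 - f q.1 * G q.2) * p q.1 q.2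
      = ∑ q ∈ antidiagonal (k + 1), F' q.1 * G q.2 * p q.1 q.2
        - ∑ q ∈ antidiagonal (k + 1), F q.1 * G' q.2 * p q.1 q.2 := by
        rw [← sum_sub_distrib]
        exact sum_congr rfl fun q _ => by rw [hf, hg]; ring
    _ = _ := by
        rw [sum_antidiagonal_succ, sum_antidiagonal_succ']
        simp only [hF'0, hG'0, hF', hG', mul_sub, sum_sub_distrib]
        ring

theorem sum_antidiagonal_mul_sub_nonneg {x : ℕ → ℝ}
    (hlc : ∀ i j : ℕ, i < j → x (i + 1) * x j ≤ x i * x (j + 1))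
    {w : ℕ → ℕ → ℝ} (hw : ∀ i j, i ≤ j → w i j ≤ w j i) (k : ℕ) :
    0 ≤ ∑ q ∈ antidiagonal k, w q.1 q.2 * (x (q.1 + 1) * x q.2 - x q.1 * x (q.2 + 1)) := by
  set d : ℕ → ℕ → ℝ := fun i j => x (i + 1) * x j - x i * x (j + 1)
  have hd : ∀ i j, d j i = -d i j := fun i j => by simp only [d]; ring
  have pair_of_le : ∀ i j, i ≤ j → 0 ≤ (w i j - w j i) * d i j := by
    intro i j hij
    have hdij : d i j ≤ 0 := by
      rcases hij.lt_or_eq with hlt | rfl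
      · exact sub_nonpos.mpr (hlc i j hlt)
      · exact (sub_eq_zero.mpr (mul_comm _ _)).le
    exact mul_nonneg_of_nonpos_of_nonpos (sub_nonpos.mpr (hw i j hij)) hdij
  have pair : ∀ i j, 0 ≤ (w i j - w j i) * d i j := by
    intro i j
    rcases le_total i j with hij | hji
    · exact pair_of_le i j hij
    · have := pair_of_le j i hji
      rw [hd i j] at this
      linarith
  -- average the sum with its image under `(i, j) ↦ (j, i)`, which negates `d`
  have hswap := sum_antidiagonal_swap (f := fun q : ℕ × ℕ => w q.1 q.2 * d q.1 q.2) (n := k)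
  simp only [Prod.fst_swap, Prod.snd_swap] at hswap
  have htwice : 2 * ∑ q ∈ antidiagonal k, w q.1 q.2 * d q.1 q.2 =
      ∑ q ∈ antidiagonal k, (w q.1 q.2 - w q.2 q.1) * d q.1 q.2 := by
    rw [two_mul]
    nth_rewrite 2 [← hswap]
    rw [← sum_add_distrib]
    exact sum_congr rfl fun q _ => by rw [hd q.1 q.2]; ring
  have := sum_nonneg fun q (_ : q ∈ antidiagonal k) => pair q.1 q.2
  linarith

end Finset.Nat

theorem stmt_9_general (x : ℕ → ℝ)
    (hlc : ∀ i j : ℕ, i < j → x (i + 1) * x j ≤ x i * x (j + 1))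
    (a b k : ℕ) (hab : b < a) :
    ∑ j ∈ Finset.range (k + 1),
        ((a + j).choose j : ℝ) * x j * ((b + 1 + (k - j)).choose (k - j) : ℝ) * x (k - j) ≤
      ∑ j ∈ Finset.range (k + 1),
        ((a + 1 + j).choose j : ℝ) * x j * ((b + (k - j)).choose (k - j) : ℝ) * x (k - j) := by
  rcases k with _ | k
  · simp
  have hF (c i : ℕ) : ((c + 1 + i).choose i : ℝ) = ∑ l ∈ range (i + 1), ((c + l).choose l : ℝ) := by
    exact_mod_cast (Nat.sum_range_add_choose_self c i).symm
  rw [← sub_nonneg, ← sum_sub_distrib]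
  calc 0 ≤ ∑ q ∈ antidiagonal k, ((a + 1 + q.1).choose q.1 * (b + 1 + q.2).choose q.2 : ℝ) *
        (x (q.1 + 1) * x q.2 - x q.1 * x (q.2 + 1)) :=
        Finset.Nat.sum_antidiagonal_mul_sub_nonneg hlc
          (w := fun i j => ((a + 1 + i).choose i * (b + 1 + j).choose j : ℝ)) (fun i j hij => by
          exact_mod_cast Nat.choose_mul_choose_le_choose_mul_choose (by omega) hij) k
    _ = ∑ q ∈ antidiagonal (k + 1), (((a + 1 + q.1).choose q.1 * (b + q.2).choose q.2 : ℝ) -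
        (a + q.1).choose q.1 * (b + 1 + q.2).choose q.2) * (x q.1 * x q.2) :=
        (Finset.Nat.sum_antidiagonal_succ_by_parts (hF a) (hF b) (fun i j => x i * x j) k).symm
    _ = _ := by
        rw [Finset.Nat.sum_antidiagonal_eq_sum_range_succ
          (fun i j => (((a + 1 + i).choose i * (b + j).choose j : ℝ) -
            (a + i).choose i * (b + 1 + j).choose j) * (x i * x j))]
        exact sum_congr rfl fun j _ => by ring

theorem stmt_9 (x : ℕ → ℝ) (hx : ∀ n, 0 ≤ x n)
    (hlc : ∀ i j : ℕ, i < j → x (i + 1) * x j ≤ x i * x (j + 1))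
    (a b k : ℕ) (hab : b < a) :
    ∑ j ∈ Finset.range (k + 1),
        ((a + j).choose j : ℝ) * x j * ((b + 1 + (k - j)).choose (k - j) : ℝ) * x (k - j) ≤
      ∑ j ∈ Finset.range (k + 1),
        ((a + 1 + j).choose j : ℝ) * x j * ((b + (k - j)).choose (k - j) : ℝ) * x (k - j) :=
  stmt_9_general x hlc a b k hab
end

section
/- Define polynomials h_i(q) by h_0(q) = 1 and, for i ≥ 1, (q − 1)·h_i(q) = q²·h_{i−1}(q) − q·C_{i−1}, where C_n = binom(2n, n)/(n+1) is the n-th Catalan number. Then for all i ≥ 1, h_i(q) = Σ_{k=1}^{i} (k/(2i−k))·binom(2i−k, i)·q^k. -/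
/-!
The coefficients `c(m, k) = k / (2m - k) * binom(2m - k, m)` of the closed form are ballot numbers: for
`1 ≤ k ≤ m` they equal `binom(2m - k - 1, m - 1) - binom(2m - k - 1, m)`. Pascal's rule then gives
`c(m + 1, k + 1) - c(m + 1, k + 2) = c(m, k)`, which is the coefficientwise form of the recurrence,
while `c(m + 1, 1) = C_m` accounts for the Catalan term. Since `X - 1` is not a zero divisor, the
recurrence determines `h` from `h 0 = 1`.
-/

open Polynomial Finset

/-- The `n`-th Catalan number as a rational, `C n = binom(2n, n)/(n+1)`. -/
noncomputable def catalanQ (n : ℕ) : ℚ := ((2 * n).choose n : ℚ) / (n + 1)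

noncomputable def ballotCoeff (m k : ℕ) : ℚ :=
  (k : ℚ) / (2 * m - k) * ((2 * m - k).choose m : ℚ)

noncomputable def ballotPoly (m : ℕ) : ℚ[X] :=
  ∑ k ∈ Icc 1 m, C (ballotCoeff m k) * X ^ k

@[simp]
lemma ballotCoeff_zero_right (m : ℕ) : ballotCoeff m 0 = 0 := by
  simp [ballotCoeff]

-- This includes `k > 2m`, where `2 * m - k` truncates to `0` and `binom(0, m) = 0` as `m > 0`.
lemma ballotCoeff_eq_zero_of_lt {m k : ℕ} (hm : 0 < m) (hk : m < k) : ballotCoeff m k = 0 := by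
  rw [ballotCoeff, Nat.choose_eq_zero_of_lt (by omega), Nat.cast_zero, mul_zero]

lemma ballotCoeff_succ_succ {m k : ℕ} (hk : k ≤ m) :
    ballotCoeff (m + 1) (k + 1) = (2 * m - k).choose m - (2 * m - k).choose (m + 1) := by
  obtain ⟨t, ht⟩ : ∃ t, t = 2 * m - k := ⟨_, rfl⟩
  have htop : 2 * (m + 1) - (k + 1) = t + 1 := by omega
  have hden : (2 * ((m + 1 : ℕ) : ℚ) - ((k + 1 : ℕ) : ℚ)) = t + 1 := by
    rw [← Nat.cast_ofNat, ← Nat.cast_mul, ← Nat.cast_sub (by omega), htop, Nat.cast_succ]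
  have hsucc : ((t + 1 : ℕ) : ℚ) * t.choose m = (t + 1).choose (m + 1) * (m + 1) := by
    exact_mod_cast Nat.add_one_mul_choose_eq t m
  have hright : (t.choose (m + 1) : ℚ) * (m + 1) = t.choose m * (t - m) := by
    rw [← Nat.cast_sub (by omega : m ≤ t)]; exact_mod_cast Nat.choose_succ_right_eq t m
  have hkt : (k : ℚ) + t = 2 * m := by
    rw [ht, Nat.cast_sub (by omega)]; push_cast; ring
  rw [ballotCoeff, htop, hden, ← ht]
  push_cast at hsucc ⊢
  field_simp
  refine mul_left_cancel₀ (show (m + 1 : ℚ) ≠ 0 by positivity) ?_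
  linear_combination (-(k + 1 : ℚ)) * hsucc + (t + 1 : ℚ) * hright + (t + 1) * t.choose m * hkt

lemma ballotCoeff_succ_self (m : ℕ) : ballotCoeff (m + 1) (m + 1) = 1 := by
  rw [ballotCoeff_succ_succ le_rfl, show 2 * m - m = m by omega, Nat.choose_self,
    Nat.choose_succ_self, Nat.cast_one, Nat.cast_zero, sub_zero]

lemma ballotCoeff_succ_one (m : ℕ) : ballotCoeff (m + 1) 1 = catalanQ m := by
  have hright : ((2 * m).choose (m + 1) : ℚ) * (m + 1) = (2 * m).choose m * m := by
    have := Nat.choose_succ_right_eq (2 * m) m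
    rw [show 2 * m - m = m by omega] at this
    exact_mod_cast this
  rw [ballotCoeff_succ_succ (Nat.zero_le m), Nat.sub_zero, catalanQ]
  field_simp
  linear_combination -hright

lemma ballotCoeff_sub_ballotCoeff {m : ℕ} (hm : 0 < m) (n : ℕ) :
    ballotCoeff (m + 1) (n + 1) - ballotCoeff (m + 1) (n + 2) = ballotCoeff m n := by
  obtain ⟨p, rfl⟩ : ∃ p, m = p + 1 := ⟨m - 1, by omega⟩
  rcases lt_trichotomy n (p + 1) with hn | rfl | hn
  · have hpascal : ballotCoeff (p + 2) (n + 1) - ballotCoeff (p + 2) (n + 2)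
        = (2 * p + 1 - n).choose p - (2 * p + 1 - n).choose (p + 1) := by
      rw [ballotCoeff_succ_succ (by omega : n ≤ p + 1),
        ballotCoeff_succ_succ (by omega : n + 1 ≤ p + 1),
        show 2 * (p + 1) - n = 2 * p + 1 - n + 1 by omega,
        show 2 * (p + 1) - (n + 1) = 2 * p + 1 - n by omega,
        Nat.choose_succ_succ', Nat.choose_succ_succ']
      push_cast
      ring
    rw [hpascal]
    rcases n with _ | n
    · rw [Nat.sub_zero, Nat.choose_symm_half, sub_self, ballotCoeff_zero_right]
    · rw [ballotCoeff_succ_succ (by omega), show 2 * p + 1 - (n + 1) = 2 * p - n by omega]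
  · rw [ballotCoeff_succ_self, ballotCoeff_succ_self,
      ballotCoeff_eq_zero_of_lt (by omega) (by omega), sub_zero]
  · rw [ballotCoeff_eq_zero_of_lt, ballotCoeff_eq_zero_of_lt, ballotCoeff_eq_zero_of_lt,
      sub_zero] <;> omega

lemma coeff_ballotPoly {m : ℕ} (hm : 0 < m) (n : ℕ) : (ballotPoly m).coeff n = ballotCoeff m n := by
  simp only [ballotPoly, finsetSum_coeff, coeff_C_mul_X_pow, Finset.sum_ite_eq, mem_Icc]
  split_ifs with hn
  · rfl
  · rcases Nat.eq_zero_or_pos n with rfl | hn0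
    · exact (ballotCoeff_zero_right m).symm
    · exact (ballotCoeff_eq_zero_of_lt hm (by omega)).symm

lemma ballotPoly_one : ballotPoly 1 = X := by
  rw [ballotPoly, Icc_self, sum_singleton, ballotCoeff_succ_self, map_one, one_mul, pow_one]

lemma X_sub_one_mul_ballotPoly_succ {m : ℕ} (hm : 0 < m) :
    (X - 1) * ballotPoly (m + 1) = X ^ 2 * ballotPoly m - C (catalanQ m) * X := by
  ext n
  rw [sub_one_mul]
  rcases n with _ | _ | n
  · simp [coeff_ballotPoly]
  · simp [coeff_ballotPoly, coeff_X_pow_mul', ballotCoeff_succ_one]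
  · simp only [coeff_sub, coeff_X_mul, coeff_X_pow_mul, coeff_C_mul_X, coeff_ballotPoly hm,
      coeff_ballotPoly (by omega : 0 < m + 1)]
    rw [ballotCoeff_sub_ballotCoeff hm, if_neg (by omega), sub_zero]

theorem stmt_10 (h : ℕ → Polynomial ℚ) (h0 : h 0 = 1)
    (hrec : ∀ i : ℕ, (X - 1) * h (i + 1) = X ^ 2 * h i - C (catalanQ i) * X) :
    ∀ i : ℕ, 1 ≤ i →
      h i = ∑ k ∈ Finset.Icc 1 i,
        C ((k : ℚ) / (2 * i - k) * ((2 * i - k).choose i : ℚ)) * X ^ k := by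
  have hX : (X - 1 : ℚ[X]) ≠ 0 := by simpa using X_sub_C_ne_zero (1 : ℚ)
  suffices ∀ i, 1 ≤ i → h i = ballotPoly i from this
  intro i hi
  induction i, hi using Nat.le_induction with
  | base =>
    refine mul_left_cancel₀ hX ?_
    rw [hrec, h0, ballotPoly_one, show catalanQ 0 = 1 by simp [catalanQ], map_one]
    ring
  | succ m hm ih =>
    refine mul_left_cancel₀ hX ?_
    rw [hrec, ih, X_sub_one_mul_ballotPoly_succ hm]
end

section
/- Let h_{i,k} = (k/(2i−k))·binom(2i−k, i) for i ≥ k ≥ 1, and let C_n denote the n-th Catalan number. Then for all i ≥ k ≥ 1: C_{i−1}·h_{i+1,k} − C_i·h_{i,k} = k(k−1)(k−2)·(2i−2)!·(2i−k−1)! / ((i+1)!·i!·(i−1)!·(i−k+1)!). In particular, C_{i−1}·h_{i+1,k} ≥ C_i·h_{i,k}. -/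
open Nat

/-- `h i k` is the number of 132-avoiding permutations of length `i` with exactly `k`
skew indecomposable components: `h i k = (k/(2i-k)) * binom(2i-k, i)`. -/
noncomputable def hQ (i k : ℕ) : ℚ := (k : ℚ) / (2 * i - k) * ((2 * i - k).choose i : ℚ)

/-!
In factorial form, `C_{i-1} h_{i+1,k}` and `C_i h_{i,k}` are both
`k (2i-2)! (2i-k-1)! / ((i+1)! i! (i-1)! (i-k+1)!)` times a quadratic cofactor, namely
`(2i-k+1)(2i-k)` and `2(2i-1)(i-k+1)`; these differ by `k² - 3k + 2 = (k-1)(k-2)`.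
The lemmas write `k = c + 1` and `i = c + 1 + m`, so that no truncated subtraction occurs.
-/

theorem catalanQ_eq_factorial (n : ℕ) : catalanQ n = (2 * n)! / (n ! * (n + 1)!) := by
  rw [catalanQ, Nat.cast_choose ℚ (by omega), show 2 * n - n = n by omega, Nat.factorial_succ]
  push_cast
  field_simp

theorem hQ_eq_factorial (c m : ℕ) :
    hQ (c + 1 + m) (c + 1) = (c + 1) * (c + 2 * m)! / ((c + 1 + m)! * m !) := by
  have hden : (2 * ((c + 1 + m : ℕ) : ℚ) - (c + 1 : ℕ)) = (c + 2 * m + 1 : ℕ) := by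
    push_cast; ring
  rw [hQ, hden, show 2 * (c + 1 + m) - (c + 1) = c + 2 * m + 1 by omega,
    Nat.cast_choose ℚ (by omega), show c + 2 * m + 1 - (c + 1 + m) = m by omega,
    Nat.factorial_succ]
  push_cast
  field_simp

theorem catalanQ_mul_hQ_sub_eq (c m : ℕ) :
    catalanQ (c + m) * hQ (c + 1 + m + 1) (c + 1) - catalanQ (c + 1 + m) * hQ (c + 1 + m) (c + 1) =
      (c + 1) * c * (c - 1) * (2 * (c + m))! * (c + 2 * m)! /
        ((c + 1 + m + 1)! * (c + 1 + m)! * (c + m)! * (m + 1)!) := by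
  rw [show c + 1 + m + 1 = c + 1 + (m + 1) by ring, hQ_eq_factorial, hQ_eq_factorial,
    catalanQ_eq_factorial, catalanQ_eq_factorial, show c + 2 * (m + 1) = c + 2 * m + 1 + 1 by ring,
    show 2 * (c + 1 + m) = 2 * (c + m) + 1 + 1 by ring, show c + 1 + (m + 1) = c + m + 1 + 1 by ring,
    show c + 1 + m = c + m + 1 by ring]
  simp only [Nat.factorial_succ]
  push_cast
  field_simp
  ring

theorem cast_mul_sub_one_mul_sub_two_nonneg (k : ℕ) : 0 ≤ (k : ℚ) * (k - 1) * (k - 2) := by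
  rcases k with _ | _ | k
  · simp
  · simp
  · push_cast
    ring_nf
    positivity

theorem stmt_11 (i k : ℕ) (hk : 1 ≤ k) (hki : k ≤ i) :
    catalanQ (i - 1) * hQ (i + 1) k - catalanQ i * hQ i k =
      ((k : ℚ) * (k - 1) * (k - 2) * (2 * i - 2)! * (2 * i - k - 1)!) /
        ((i + 1)! * i ! * (i - 1)! * (i - k + 1)!) ∧
    catalanQ i * hQ i k ≤ catalanQ (i - 1) * hQ (i + 1) k := by
  have key : catalanQ (i - 1) * hQ (i + 1) k - catalanQ i * hQ i k =
      ((k : ℚ) * (k - 1) * (k - 2) * (2 * i - 2)! * (2 * i - k - 1)!) /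
        ((i + 1)! * i ! * (i - 1)! * (i - k + 1)!) := by
    obtain ⟨c, rfl⟩ : ∃ c, k = c + 1 := ⟨k - 1, by omega⟩
    obtain ⟨m, rfl⟩ : ∃ m, i = c + 1 + m := ⟨i - (c + 1), by omega⟩
    rw [show c + 1 + m - 1 = c + m by omega, show 2 * (c + 1 + m) - 2 = 2 * (c + m) by omega,
      show 2 * (c + 1 + m) - (c + 1) - 1 = c + 2 * m by omega,
      show c + 1 + m - (c + 1) + 1 = m + 1 by omega, catalanQ_mul_hQ_sub_eq]
    push_cast
    ring
  refine ⟨key, sub_nonneg.1 ?_⟩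
  rw [key]
  have := cast_mul_sub_one_mul_sub_two_nonneg k
  positivity
end

section
/- For all integers j > i ≥ k ≥ 1, C_{i−1}·h_{j,k} ≥ C_{j−1}·h_{i,k}, where h_{i,k} = (k/(2i−k))·binom(2i−k, i) and C_n is the n-th Catalan number. -/
theorem Nat.add_two_choose_add_one_mul (m r : ℕ) :
    (m + 2).choose (r + 1) * ((r + 1) * (m + 1 - r)) = (m + 1) * (m + 2) * m.choose r := by
  calc (m + 2).choose (r + 1) * ((r + 1) * (m + 1 - r))
      = (m + 2).choose (r + 1) * (r + 1) * (m + 1 - r) := by ring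
    _ = (m + 2) * ((m + 1).choose r * (m + 1 - r)) := by
      rw [← Nat.add_one_mul_choose_eq]; ring
    _ = (m + 1) * (m + 2) * m.choose r := by rw [← Nat.choose_mul_succ_eq]; ring

theorem catalanQ_pos (n : ℕ) : 0 < catalanQ n := by
  unfold catalanQ
  have := Nat.choose_pos (Nat.le_mul_of_pos_left n two_pos)
  positivity

theorem catalanQ_succ (n : ℕ) :
    catalanQ (n + 1) = 2 * (2 * n + 1) / (n + 2) * catalanQ n := by
  have h := Nat.succ_mul_centralBinom_succ n
  simp only [Nat.centralBinom_eq_two_mul_choose] at h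
  unfold catalanQ
  push_cast
  field_simp
  have h' : ((n : ℚ) + 1) * (2 * (n + 1)).choose (n + 1) =
      2 * (2 * n + 1) * (2 * n).choose n := by
    exact_mod_cast h
  linear_combination ((n : ℚ) + 2) * h'

theorem hQ_pos {i k : ℕ} (hk : 1 ≤ k) (hki : k ≤ i) : 0 < hQ i k := by
  unfold hQ
  have hk' : (1 : ℚ) ≤ k := by exact_mod_cast hk
  have hki' : (k : ℚ) ≤ i := by exact_mod_cast hki
  have : 0 < 2 * (i : ℚ) - k := by linarith
  have := Nat.choose_pos (show i ≤ 2 * i - k by omega)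
  positivity

theorem hQ_succ {i k : ℕ} (hk : 1 ≤ k) (hki : k ≤ i) :
    hQ (i + 1) k = (2 * i - k) * (2 * i + 1 - k) / ((i + 1) * (i + 1 - k)) * hQ i k := by
  have h := Nat.add_two_choose_add_one_mul (2 * i - k) i
  rw [show 2 * i - k + 2 = 2 * (i + 1) - k by omega,
    show 2 * i - k + 1 - i = i + 1 - k by omega] at h
  have h' : ((2 * (i + 1) - k).choose (i + 1) : ℚ) * ((i + 1) * (i + 1 - k)) =
      (2 * i + 1 - k) * (2 * i + 2 - k) * (2 * i - k).choose i := by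
    have := congrArg (Nat.cast : ℕ → ℚ) h
    push_cast [Nat.cast_sub (show k ≤ 2 * i by omega),
      Nat.cast_sub (show k ≤ 2 * (i + 1) by omega),
      Nat.cast_sub (show k ≤ i + 1 by omega)] at this
    linear_combination this
  have hk' : (1 : ℚ) ≤ k := by exact_mod_cast hk
  have hki' : (k : ℚ) ≤ i := by exact_mod_cast hki
  have h1 : 2 * (i : ℚ) - k ≠ 0 := by linarith
  have h2 : 2 * ((i : ℚ) + 1) - k ≠ 0 := by linarith
  have h3 : (i : ℚ) + 1 - k ≠ 0 := by linarith
  unfold hQ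
  push_cast
  field_simp
  linear_combination h'

theorem two_mul_two_mul_sub_one_mul_le (x : ℚ) (k : ℕ) :
    2 * (2 * x - 1) * (x + 1 - k) ≤ (2 * x - k) * (2 * x + 1 - k) := by
  have : 0 ≤ ((k : ℚ) - 1) * ((k : ℚ) - 2) := by
    rcases Nat.lt_or_ge k 2 with hk | hk
    · interval_cases k <;> norm_num
    · have : (2 : ℚ) ≤ k := by exact_mod_cast hk
      nlinarith
  nlinarith

theorem hQ_div_catalanQ_le_succ {i k : ℕ} (hk : 1 ≤ k) (hki : k ≤ i) :
    hQ i k / catalanQ (i - 1) ≤ hQ (i + 1) k / catalanQ i := by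
  obtain ⟨n, rfl⟩ : ∃ n, i = n + 1 := ⟨i - 1, by omega⟩
  have hki' : (k : ℚ) ≤ n + 1 := by exact_mod_cast hki
  have hratio : 2 * (2 * (n : ℚ) + 1) / (n + 2) ≤
      (2 * ((n : ℚ) + 1) - k) * (2 * (n + 1) + 1 - k) / ((n + 1 + 1) * (n + 1 + 1 - k)) := by
    rw [div_le_div_iff₀ (by positivity) (by nlinarith)]
    nlinarith [two_mul_two_mul_sub_one_mul_le ((n : ℚ) + 1) k]
  rw [Nat.add_sub_cancel, hQ_succ hk hki, catalanQ_succ, div_le_div_iff₀ (catalanQ_pos n)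
    (mul_pos (by positivity) (catalanQ_pos n))]
  push_cast
  linear_combination mul_le_mul_of_nonneg_right hratio (mul_pos (hQ_pos hk hki) (catalanQ_pos n)).le

theorem hQ_div_catalanQ_monotoneOn {k : ℕ} (hk : 1 ≤ k) :
    MonotoneOn (fun i => hQ i k / catalanQ (i - 1)) (Set.Ici k) :=
  monotoneOn_nat_Ici_of_le_succ fun _ hi => hQ_div_catalanQ_le_succ hk hi

theorem stmt_12 (i j k : ℕ) (hk : 1 ≤ k) (hki : k ≤ i) (hij : i < j) :
    catalanQ (j - 1) * hQ i k ≤ catalanQ (i - 1) * hQ j k := by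
  have hmono := hQ_div_catalanQ_monotoneOn hk hki (show k ≤ j by omega) hij.le
  rw [div_le_div_iff₀ (catalanQ_pos _) (catalanQ_pos _)] at hmono
  linarith
end

section
/- The number of 132-avoiding permutations of length n with exactly c skew indecomposable components equals (c/n)·binom(2n−c−1, n−1), for 1 ≤ c ≤ n. -/
/-- A permutation `σ` of `{0, …, n-1}` avoids the pattern 132 if there are no positions
`i < j < k` with `σ i < σ k < σ j`. -/
def Avoids132 {n : ℕ} (σ : Equiv.Perm (Fin n)) : Prop :=
  ¬ ∃ i j k : Fin n, i < j ∧ j < k ∧ σ i < σ k ∧ σ k < σ j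

/-- `σ` splits skewly at position `m` (with `0 < m < n`) if the first `m` entries are
exactly the `m` largest values. -/
def SkewSplitAt {n : ℕ} (σ : Equiv.Perm (Fin n)) (m : ℕ) : Prop :=
  ∀ i : Fin n, (i : ℕ) < m ↔ n - m ≤ (σ i : ℕ)

open Classical in
/-- The number of skew indecomposable components of `σ`: one more than the number of
internal skew split positions. -/
noncomputable def skewComponents {n : ℕ} (σ : Equiv.Perm (Fin n)) : ℕ :=
  1 + ((Finset.Ioo 0 n).filter (fun m => SkewSplitAt σ m)).card

/-!
Let `a(n, c)` count the 132-avoiders of length `n` with `c` skew components; these satisfy the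
ballot recurrence `a(n, c) = a(n - 1, c - 1) + a(n, c + 1)`.

If `σ` starts with its maximum then `σ = 1 ⊖ τ`, and `τ` is a 132-avoider with `c - 1`
components. Otherwise let `q` and `p` be the positions of `n - 2` and `n - 1`. Avoiding 132
forces `q < p` and puts the top `q + 2` values exactly at the positions `0, …, q` and `p`.
Cycling the values `n - 2 - q, …, n - 1` so that the maximum drops to the bottom of that block
splits off the positions `0, …, q` as a new component, and this is a bijection onto the
132-avoiders with `c + 1` components; its inverse is read off from the position `q` of the
maximum, since a 132-avoider with a split has its prefix up to the maximum as a top block.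
-/

open Finset Equiv

section SkewComponents

variable {n : ℕ}

theorem one_le_skewComponents (σ : Perm (Fin n)) : 1 ≤ skewComponents σ :=
  Nat.le_add_right 1 _

theorem skewSplitAt_zero (σ : Perm (Fin n)) : SkewSplitAt σ 0 := fun i => by
  simp [(σ i).isLt]

open Classical in
theorem skewComponents_eq_card_range (hn : 0 < n) (σ : Perm (Fin n)) :
    skewComponents σ = #((range n).filter fun t => SkewSplitAt σ t) := by
  rw [range_eq_Ico, ← Ioo_insert_left hn, filter_insert, if_pos (skewSplitAt_zero σ),
    card_insert_of_notMem (by simp), skewComponents, add_comm]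

theorem skewComponents_le (hn : 0 < n) (σ : Perm (Fin n)) : skewComponents σ ≤ n := by
  classical
  rw [skewComponents_eq_card_range hn]
  exact (card_filter_le _ _).trans_eq (card_range n)

open Classical in
theorem exists_skewSplitAt_of_two_le {σ : Perm (Fin n)} (hc : 2 ≤ skewComponents σ) :
    ∃ t, 0 < t ∧ t < n ∧ SkewSplitAt σ t := by
  unfold skewComponents at hc
  obtain ⟨t, ht⟩ := card_pos.mp (show 0 < #((Ioo 0 n).filter fun t => SkewSplitAt σ t) by omega)
  simp only [mem_filter, mem_Ioo] at ht
  exact ⟨t, ht.1.1, ht.1.2, ht.2⟩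

theorem mem_iff_sub_card_le_apply (σ : Perm (Fin n)) {A : Finset (Fin n)}
    (hA : ∀ i ∈ A, ∀ k ∉ A, σ k < σ i) (i : Fin n) : i ∈ A ↔ n - #A ≤ σ i := by
  constructor
  · intro hi
    have hsub : Aᶜ.map σ.toEmbedding ⊆ Iio (σ i) := by
      intro v hv
      obtain ⟨k, hk, rfl⟩ := mem_map.mp hv
      exact mem_Iio.mpr (hA i hi k (mem_compl.mp hk))
    have := card_le_card hsub
    rw [card_map, card_compl, Fintype.card_fin, Fin.card_Iio] at this
    omega
  · intro hle
    by_contra hi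
    have hsub : A.map σ.toEmbedding ⊆ Ioi (σ i) := by
      intro v hv
      obtain ⟨k, hk, rfl⟩ := mem_map.mp hv
      exact mem_Ioi.mpr (hA k hk i hi)
    have := card_le_card hsub
    rw [card_map, Fin.card_Ioi] at this
    omega

end SkewComponents

theorem Avoids132.apply_lt_of_apply_eq_last {m : ℕ} {σ : Perm (Fin (m + 1))} (hσ : Avoids132 σ)
    {i j k : Fin (m + 1)} (hj : σ j = Fin.last m) (hij : i < j) (hjk : j < k) : σ k < σ i := by
  refine lt_of_not_ge fun hik => hσ ⟨i, j, k, hij, hjk, ?_, ?_⟩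
  · exact lt_of_le_of_ne hik (σ.injective.ne (hij.trans hjk).ne)
  · exact hj ▸ lt_of_le_of_ne (Fin.le_last _) (hj ▸ σ.injective.ne hjk.ne')

section PrependMax

variable {m : ℕ}

/-- The skew sum `1 ⊖ τ`. -/
def prependMax (τ : Perm (Fin m)) : Perm (Fin (m + 1)) where
  toFun i := Fin.cases (Fin.last m) (fun j => (τ j).castSucc) i
  invFun v := Fin.lastCases 0 (fun w => (τ.symm w).succ) v
  left_inv i := by cases i using Fin.cases <;> simp
  right_inv v := by cases v using Fin.lastCases <;> simp

@[simp]
theorem prependMax_zero (τ : Perm (Fin m)) : prependMax τ 0 = Fin.last m := rfl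

@[simp]
theorem prependMax_succ (τ : Perm (Fin m)) (j : Fin m) :
    prependMax τ j.succ = (τ j).castSucc := by
  simp [prependMax]

def dropHead (σ : Perm (Fin (m + 1))) (h : σ 0 = Fin.last m) : Perm (Fin m) where
  toFun j := (σ j.succ).castPred fun e => j.succ_ne_zero (σ.injective (e.trans h.symm))
  invFun w := (σ.symm w.castSucc).pred fun e =>
    (Fin.castSucc_lt_last w).ne (by rw [← h, ← e, Equiv.apply_symm_apply])
  left_inv j := by simp
  right_inv w := by simp

theorem prependMax_dropHead (σ : Perm (Fin (m + 1))) (h : σ 0 = Fin.last m) :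
    prependMax (dropHead σ h) = σ := by
  ext i
  cases i using Fin.cases <;> simp [dropHead, h]

theorem dropHead_prependMax (τ : Perm (Fin m)) : dropHead (prependMax τ) rfl = τ := by
  ext j
  simp [dropHead]

theorem avoids132_prependMax_iff (τ : Perm (Fin m)) :
    Avoids132 (prependMax τ) ↔ Avoids132 τ := by
  have hlast (w : Fin m) : ¬ Fin.last m < w.castSucc := (Fin.castSucc_lt_last w).not_gt
  simp [Avoids132, Fin.exists_fin_succ, hlast]

theorem skewSplitAt_prependMax_iff (τ : Perm (Fin m)) (t : ℕ) :
    SkewSplitAt (prependMax τ) (t + 1) ↔ SkewSplitAt τ t := by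
  simp only [SkewSplitAt, Fin.forall_fin_succ, prependMax_zero, prependMax_succ, Fin.val_zero,
    Fin.val_last, Fin.val_succ, Fin.val_castSucc]
  constructor
  · exact fun h j => by have := h.2 j; omega
  · exact fun h => ⟨by omega, fun j => by have := h j; omega⟩

theorem skewComponents_prependMax (hm : 0 < m) (τ : Perm (Fin m)) :
    skewComponents (prependMax τ) = skewComponents τ + 1 := by
  classical
  rw [skewComponents_eq_card_range m.succ_pos, skewComponents_eq_card_range hm, card_filter,
    card_filter, sum_range_succ', if_pos (skewSplitAt_zero _)]
  simp only [skewSplitAt_prependMax_iff]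

end PrependMax

section SplitFirstComponent

variable {m : ℕ}

def shiftCycle (q : Fin (m + 1)) : Perm (Fin (m + 1)) :=
  Fin.cycleIcc ⟨m - 1 - q, by omega⟩ (Fin.last m)

theorem shiftCycle_val (q v : Fin (m + 1)) :
    (shiftCycle q v : ℕ) =
      if (v : ℕ) < m - 1 - q then (v : ℕ) else if (v : ℕ) = m then m - 1 - q else (v : ℕ) + 1 := by
  unfold shiftCycle
  split_ifs with h1 h2
  · rw [Fin.cycleIcc_of_lt (Fin.lt_def.mpr h1)]
  · rw [show v = Fin.last m from Fin.ext h2, Fin.cycleIcc_of_last (Fin.le_last _)]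
  · have hlt : v < Fin.last m := Fin.lt_def.mpr (by simp only [Fin.val_last]; omega)
    rw [Fin.cycleIcc_of_ge_of_lt (Fin.le_def.mpr (by simp only; omega)) hlt,
      Fin.val_add_one_of_lt hlt]

/-- `σ.trans (shiftCycle q)` lowers the largest value, at `p`, to the bottom of the top block,
making positions `0, …, q` a skew component of their own. -/
structure Splittable (σ : Perm (Fin (m + 1))) (q p : Fin (m + 1)) : Prop where
  lt : q < p
  apply_p : (σ p : ℕ) = m
  apply_q : (σ q : ℕ) = m - 1
  top : ∀ i, i ≤ q ∨ i = p ↔ m - 1 - q ≤ (σ i : ℕ)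

namespace Splittable

variable {σ : Perm (Fin (m + 1))} {q p : Fin (m + 1)}

theorem zones (h : Splittable σ q p) (i : Fin (m + 1)) :
    ((i : ℕ) ≤ q ∧ (σ.trans (shiftCycle q) i : ℕ) = σ i + 1 ∧
        m - 1 - q ≤ (σ i : ℕ) ∧ (σ i : ℕ) < m) ∨
      ((i : ℕ) = p ∧ (σ i : ℕ) = m ∧ (σ.trans (shiftCycle q) i : ℕ) = m - 1 - q) ∨
      ((q : ℕ) < i ∧ (i : ℕ) ≠ p ∧ (σ.trans (shiftCycle q) i : ℕ) = σ i ∧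
        (σ i : ℕ) < m - 1 - q) := by
  have hv := shiftCycle_val q (σ i)
  have htop := h.top i
  have hp := h.apply_p
  have hqp := Fin.lt_def.mp h.lt
  have hpeak : (σ i : ℕ) = σ p ↔ (i : ℕ) = p := by
    rw [Fin.val_inj, Fin.val_inj, σ.injective.eq_iff]
  have := (σ i).isLt
  rw [Fin.le_def, Fin.ext_iff] at htop
  rw [Equiv.trans_apply]
  split_ifs at hv <;> omega

theorem avoids132_trans_iff (h : Splittable σ q p) :
    Avoids132 (σ.trans (shiftCycle q)) ↔ Avoids132 σ := by
  refine not_congr (exists_congr fun i => exists_congr fun j => exists_congr fun k => ?_)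
  have := h.zones i
  have := h.zones j
  have := h.zones k
  have := Fin.lt_def.mp h.lt
  simp only [Fin.lt_def]
  omega

theorem skewSplitAt_trans_iff (h : Splittable σ q p) (t : ℕ) :
    SkewSplitAt (σ.trans (shiftCycle q)) t ↔ SkewSplitAt σ t ∨ t = q + 1 := by
  have hqp := Fin.lt_def.mp h.lt
  have hp := h.apply_p
  have hq := h.apply_q
  have hzq := h.zones q
  by_cases ht : 1 ≤ t ∧ t ≤ q + 1
  · rcases ht.2.lt_or_eq with htq | rfl
    · refine iff_of_false (fun hs => ?_) (fun hs => ?_)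
      · have := (hs q).mpr
        omega
      · rcases hs with hs | rfl
        · have := (hs p).mpr
          omega
        · omega
    · refine iff_of_true (fun i => ?_) (Or.inr rfl)
      have := h.zones i
      omega
  · rw [or_iff_left (by omega)]
    refine forall_congr' fun i => iff_congr Iff.rfl ?_
    have := h.zones i
    omega

open Classical in
theorem skewComponents_trans (h : Splittable σ q p) :
    skewComponents (σ.trans (shiftCycle q)) = skewComponents σ + 1 := by
  have hqp := Fin.lt_def.mp h.lt
  have hp := h.apply_p
  have hnew : ¬ SkewSplitAt σ (q + 1) := fun hs => by
    have := (hs p).mpr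
    omega
  have hsplits : (Ioo 0 (m + 1)).filter (fun t => SkewSplitAt (σ.trans (shiftCycle q)) t) =
      insert ((q : ℕ) + 1) ((Ioo 0 (m + 1)).filter (fun t => SkewSplitAt σ t)) := by
    ext t
    simp only [mem_filter, mem_insert, mem_Ioo, h.skewSplitAt_trans_iff]
    constructor
    · rintro ⟨ht, hs | rfl⟩
      exacts [Or.inr ⟨ht, hs⟩, Or.inl rfl]
    · rintro (rfl | ⟨ht, hs⟩)
      exacts [⟨⟨by omega, by omega⟩, Or.inr rfl⟩, ⟨ht, Or.inl hs⟩]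
  unfold skewComponents
  rw [hsplits, card_insert_of_notMem (by simp [hnew])]
  omega

theorem apply_zero_ne_last (h : Splittable σ q p) : σ 0 ≠ Fin.last m := fun e => by
  have hz := h.zones 0
  have := Fin.lt_def.mp h.lt
  rw [e, Fin.val_last, Fin.val_zero] at hz
  omega

theorem symm_apply_sub_one (h : Splittable σ q p) : σ.symm ⟨m - 1, by omega⟩ = q :=
  σ.symm_apply_eq.mpr (Fin.ext h.apply_q.symm)

theorem symm_trans_apply_last (h : Splittable σ q p) :
    (σ.trans (shiftCycle q)).symm (Fin.last m) = q := by
  refine (Equiv.symm_apply_eq _).mpr (Fin.ext ?_)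
  have := h.zones q
  have := h.apply_q
  have := Fin.lt_def.mp h.lt
  have := p.isLt
  simp only [Fin.val_last]
  omega

end Splittable

variable {σ : Perm (Fin (m + 1))}

theorem splittable_of_avoids132 (hσ : Avoids132 σ) (h0 : σ 0 ≠ Fin.last m) :
    Splittable σ (σ.symm ⟨m - 1, by omega⟩) (σ.symm (Fin.last m)) := by
  set q := σ.symm ⟨m - 1, by omega⟩
  set p := σ.symm (Fin.last m)
  have hp : σ p = Fin.last m := σ.apply_symm_apply _
  have hq : (σ q : ℕ) = m - 1 := by simp [q]
  have hm : m ≠ 0 := by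
    rintro rfl
    exact h0 (Fin.ext (by have := (σ 0).isLt; simp only [Fin.val_last]; omega))
  have hqp : q < p := by
    have hp0 : 0 < p := Fin.pos_iff_ne_zero.mpr fun e => h0 (e ▸ hp)
    refine lt_of_not_ge fun hpq => ?_
    rcases hpq.lt_or_eq with hpq | hpq
    · have h1 := Fin.lt_def.mp (hσ.apply_lt_of_apply_eq_last hp hp0 hpq)
      have h2 : (σ 0 : ℕ) ≠ m := fun e => h0 (Fin.ext e)
      have := (σ 0).isLt
      omega
    · have := congrArg Fin.val (congrArg σ hpq)
      simp only [hp, Fin.val_last] at this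
      omega
  have hbelow : ∀ k, q < k → k ≠ p → σ k < σ q := by
    intro k hqk hkp
    have h1 : (σ k : ℕ) ≠ m := fun e => hkp (σ.injective (hp ▸ Fin.ext e))
    have h2 : σ k ≠ σ q := σ.injective.ne hqk.ne'
    have := (σ k).isLt
    rw [Fin.lt_def, hq]
    rw [Ne, Fin.ext_iff, hq] at h2
    omega
  refine ⟨hqp, by simp [hp], hq, fun i => ?_⟩
  have htop := mem_iff_sub_card_le_apply σ (A := insert p (Iic q)) ?_ i
  · rw [card_insert_of_notMem (by simpa using hqp), Fin.card_Iic] at htop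
    simpa [or_comm, show m + 1 - (q + 1 + 1) = m - 1 - q by omega] using htop
  · intro i hi k hk
    simp only [mem_insert, mem_Iic, not_or, not_le] at hi hk
    rcases hi with rfl | hi
    · exact hp ▸ lt_of_le_of_ne (Fin.le_last _) (hp ▸ σ.injective.ne hk.1)
    · rcases hi.lt_or_eq with hi | rfl
      · exact lt_of_not_ge fun hle => hσ ⟨i, q, k, hi, hk.2,
          lt_of_le_of_ne hle (σ.injective.ne (hi.trans hk.2).ne), hbelow k hk.2 hk.1⟩
      · exact hbelow k hk.2 hk.1

def splitFirstComponent (σ : Perm (Fin (m + 1))) : Perm (Fin (m + 1)) :=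
  σ.trans (shiftCycle (σ.symm ⟨m - 1, by omega⟩))

def mergeFirstComponents (σ : Perm (Fin (m + 1))) : Perm (Fin (m + 1)) :=
  σ.trans (shiftCycle (σ.symm (Fin.last m))).symm

theorem splittable_mergeFirstComponents (hσ : Avoids132 σ) (hc : 2 ≤ skewComponents σ) :
    ∃ p, Splittable (mergeFirstComponents σ) (σ.symm (Fin.last m)) p := by
  set q := σ.symm (Fin.last m)
  set τ := mergeFirstComponents σ
  have hq : σ q = Fin.last m := σ.apply_symm_apply _
  have hqm : (q : ℕ) < m := by
    obtain ⟨t, ht0, htm, hs⟩ := exists_skewSplitAt_of_two_le hc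
    have := (hs q).mpr (by simp only [hq, Fin.val_last]; omega)
    omega
  have hprefix : ∀ i, i ≤ q ↔ m - q ≤ (σ i : ℕ) := by
    intro i
    have htop := mem_iff_sub_card_le_apply σ (A := Iic q) ?_ i
    · simpa [show m + 1 - (q + 1) = m - q by omega] using htop
    · intro i hi k hk
      simp only [mem_Iic, not_le] at hi hk
      rcases hi.lt_or_eq with hi | rfl
      · exact hσ.apply_lt_of_apply_eq_last hq hi hk
      · exact hq ▸ lt_of_le_of_ne (Fin.le_last _) (hq ▸ σ.injective.ne hk.ne')
  set p := σ.symm ⟨m - 1 - q, by omega⟩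
  have hp : (σ p : ℕ) = m - 1 - q := by simp [p]
  have hpeak : ∀ i, (σ i : ℕ) = σ p ↔ (i : ℕ) = p := fun i => by
    rw [Fin.val_inj, Fin.val_inj, σ.injective.eq_iff]
  have hval : ∀ i, (σ i : ℕ) = if (τ i : ℕ) < m - 1 - q then (τ i : ℕ)
      else if (τ i : ℕ) = m then m - 1 - q else (τ i : ℕ) + 1 := fun i => by
    rw [← shiftCycle_val]
    simp [τ, mergeFirstComponents, q]
  refine ⟨p, ⟨?_, ?_, ?_, fun i => ?_⟩⟩
  · refine lt_of_not_ge fun hpq => ?_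
    have := (hprefix p).mp hpq
    omega
  · have hv := hval p
    split_ifs at hv <;> omega
  · have hv := hval q
    simp only [hq, Fin.val_last] at hv
    split_ifs at hv <;> omega
  · have hv := hval i
    have := (τ i).isLt
    rw [Fin.le_def, Fin.ext_iff, ← hpeak, Fin.le_def.symm, hprefix]
    split_ifs at hv <;> omega

theorem mergeFirstComponents_trans (σ : Perm (Fin (m + 1))) :
    (mergeFirstComponents σ).trans (shiftCycle (σ.symm (Fin.last m))) = σ := by
  simp [mergeFirstComponents, Equiv.trans_assoc]

end SplitFirstComponent

section Count

variable {m : ℕ}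

open Classical in
noncomputable def avoiders132 (n c : ℕ) : Finset (Perm (Fin n)) :=
  {σ | Avoids132 σ ∧ skewComponents σ = c}

theorem mem_avoiders132 {n c : ℕ} {σ : Perm (Fin n)} :
    σ ∈ avoiders132 n c ↔ Avoids132 σ ∧ skewComponents σ = c := by
  simp [avoiders132]

theorem avoiders132_zero (n : ℕ) : avoiders132 n 0 = ∅ :=
  eq_empty_of_forall_notMem fun σ hσ => by
    have := one_le_skewComponents σ
    rw [mem_avoiders132] at hσ
    omega

theorem avoiders132_eq_empty_of_lt {n c : ℕ} (hn : 0 < n) (hc : n < c) : avoiders132 n c = ∅ :=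
  eq_empty_of_forall_notMem fun σ hσ => by
    have := skewComponents_le hn σ
    rw [mem_avoiders132] at hσ
    omega

theorem card_avoiders132_one_one : #(avoiders132 1 1) = 1 := by
  rw [card_eq_one]
  refine ⟨1, eq_singleton_iff_unique_mem.mpr ⟨?_, fun σ _ => Subsingleton.elim _ _⟩⟩
  rw [mem_avoiders132]
  refine ⟨fun ⟨i, j, _, hij, _⟩ => by omega, ?_⟩
  simp only [skewComponents, add_eq_left, card_eq_zero, filter_eq_empty_iff, mem_Ioo]
  omega

theorem card_filter_avoiders132_apply_zero_eq_last (hm : 0 < m) {c : ℕ} (hc : 1 ≤ c) :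
    #((avoiders132 (m + 1) c).filter (fun σ => σ 0 = Fin.last m)) =
      #(avoiders132 m (c - 1)) := by
  symm
  refine card_bij' (fun τ _ => prependMax τ) (fun σ hσ => dropHead σ (mem_filter.mp hσ).2)
    (fun τ hτ => ?_) (fun σ hσ => ?_) (fun τ _ => dropHead_prependMax τ)
    (fun σ _ => prependMax_dropHead σ _)
  · rw [mem_avoiders132] at hτ
    simp only [mem_filter, mem_avoiders132, avoids132_prependMax_iff, skewComponents_prependMax hm,
      prependMax_zero, and_true]
    exact ⟨hτ.1, by omega⟩
  · obtain ⟨hσ, h0⟩ := mem_filter.mp hσ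
    rw [mem_avoiders132, ← prependMax_dropHead σ h0] at hσ
    rw [mem_avoiders132, ← avoids132_prependMax_iff, ← Nat.add_right_cancel_iff (n := 1),
      ← skewComponents_prependMax hm]
    exact ⟨hσ.1, by omega⟩

theorem card_filter_avoiders132_apply_zero_ne_last {c : ℕ} (hc : 1 ≤ c) :
    #((avoiders132 (m + 1) c).filter (fun σ => σ 0 ≠ Fin.last m)) =
      #(avoiders132 (m + 1) (c + 1)) := by
  refine card_nbij' splitFirstComponent mergeFirstComponents ?_ ?_ ?_ ?_
  · intro σ hσ
    simp only [mem_coe, mem_filter, mem_avoiders132] at hσ ⊢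
    obtain ⟨⟨ha, hσc⟩, h0⟩ := hσ
    have h := splittable_of_avoids132 ha h0
    exact ⟨h.avoids132_trans_iff.mpr ha, by rw [splitFirstComponent, h.skewComponents_trans, hσc]⟩
  · intro σ hσ
    simp only [mem_coe, mem_filter, mem_avoiders132] at hσ ⊢
    obtain ⟨ha, hσc⟩ := hσ
    obtain ⟨p, h⟩ := splittable_mergeFirstComponents ha (by omega)
    have hskew := h.skewComponents_trans
    rw [mergeFirstComponents_trans] at hskew
    refine ⟨⟨h.avoids132_trans_iff.mp ?_, by omega⟩, h.apply_zero_ne_last⟩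
    rwa [mergeFirstComponents_trans]
  · intro σ hσ
    simp only [mem_coe, mem_filter, mem_avoiders132] at hσ
    have h := splittable_of_avoids132 hσ.1.1 hσ.2
    rw [mergeFirstComponents, splitFirstComponent, h.symm_trans_apply_last]
    simp [Equiv.trans_assoc]
  · intro σ hσ
    simp only [mem_coe, mem_avoiders132] at hσ
    obtain ⟨p, h⟩ := splittable_mergeFirstComponents hσ.1 (by omega)
    rw [splitFirstComponent, h.symm_apply_sub_one, mergeFirstComponents_trans]

theorem card_avoiders132_succ (hm : 0 < m) {c : ℕ} (hc : 1 ≤ c) :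
    #(avoiders132 (m + 1) c) = #(avoiders132 m (c - 1)) + #(avoiders132 (m + 1) (c + 1)) := by
  rw [← card_filter_add_card_filter_not (fun σ => σ 0 = Fin.last m),
    card_filter_avoiders132_apply_zero_eq_last hm hc, card_filter_avoiders132_apply_zero_ne_last hc]

end Count

def ballot (n c : ℕ) : ℚ := (c : ℚ) / n * ((2 * n - c - 1).choose (n - 1) : ℚ)

theorem ballot_zero_right (n : ℕ) : ballot n 0 = 0 := by
  simp [ballot]

theorem ballot_succ_add_two {m : ℕ} (hm : 0 < m) : ballot (m + 1) (m + 2) = 0 := by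
  simp [ballot, Nat.choose_eq_zero_of_lt (show 2 * (m + 1) - (m + 2) - 1 < m by omega)]

theorem ballot_succ {m c : ℕ} (hm : 0 < m) (hc : 1 ≤ c) (hcm : c ≤ m + 1) :
    ballot (m + 1) c = ballot m (c - 1) + ballot (m + 1) (c + 1) := by
  obtain ⟨k, rfl⟩ : ∃ k, m = k + 1 := ⟨m - 1, by omega⟩
  set N := 2 * (k + 1) - c
  have hratio : (N.choose (k + 1) : ℚ) * (k + 1) = N.choose k * (k + 2 - c) := by
    have := Nat.choose_succ_right_eq N k
    rw [show N - k = k + 2 - c by omega] at this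
    exact_mod_cast this
  simp only [ballot, show 2 * (k + 1 + 1) - c - 1 = N + 1 by omega,
    show 2 * (k + 1) - (c - 1) - 1 = N by omega, show 2 * (k + 1 + 1) - (c + 1) - 1 = N by omega,
    Nat.add_sub_cancel, Nat.choose_succ_succ', Nat.cast_add, Nat.cast_sub hc]
  field_simp
  linear_combination -hratio

theorem card_avoiders132 {n c : ℕ} (hcn : c ≤ n) : (#(avoiders132 n c) : ℚ) = ballot n c := by
  induction h : 2 * n - c using Nat.strong_induction_on generalizing n c with
  | _ k ih =>
    rcases Nat.eq_zero_or_pos c with rfl | hc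
    · simp [avoiders132_zero, ballot_zero_right]
    obtain ⟨m, rfl⟩ : ∃ m, n = m + 1 := ⟨n - 1, by omega⟩
    rcases Nat.eq_zero_or_pos m with rfl | hm
    · obtain rfl : c = 1 := by omega
      simp [card_avoiders132_one_one, ballot]
    have hnext : (#(avoiders132 (m + 1) (c + 1)) : ℚ) = ballot (m + 1) (c + 1) := by
      rcases hcn.lt_or_eq with hlt | rfl
      · exact ih _ (by omega) hlt rfl
      · simp [avoiders132_eq_empty_of_lt, ballot_succ_add_two hm]
    rw [card_avoiders132_succ hm hc, Nat.cast_add, ih _ (by omega) (by omega) rfl, hnext,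
      ballot_succ hm hc hcn]

theorem stmt_13_general (n c : ℕ) (hcn : c ≤ n) :
    (Nat.card {σ : Equiv.Perm (Fin n) // Avoids132 σ ∧ skewComponents σ = c} : ℚ) =
      (c : ℚ) / n * ((2 * n - c - 1).choose (n - 1) : ℚ) := by
  classical
  rw [← ballot, ← card_avoiders132 hcn, Nat.card_eq_fintype_card, Fintype.card_subtype,
    avoiders132]

theorem stmt_13 (n c : ℕ) (hc : 1 ≤ c) (hcn : c ≤ n) :
    (Nat.card {σ : Equiv.Perm (Fin n) // Avoids132 σ ∧ skewComponents σ = c} : ℚ) =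
      (c : ℚ) / n * ((2 * n - c - 1).choose (n - 1) : ℚ) :=
  stmt_13_general n c hcn
end

section
/- lim_{k→∞} [ (27/4)^{28k²} · θ(14k)^k · (7/8)^k · binom(9k−1, 8k−1)^k · binom(21k, 14k)^{2k−1} ]^{1/(36k²)} = 81/8, whenever θ: ℕ → ℝ_{>0} satisfies lim_{n→∞} θ(n)^{1/n} = 1. -/
/-!
Take logarithms. Stirling's formula gives `log n! = n log n - n + o(n)`, hence
`log C(a k, b k) = k (a log a - b log b - (a - b) log (a - b)) + o(k)`, and
`C(9k-1, 8k-1) = (8/9) C(9k, 8k)` has the same growth. Dividing the logarithm of the product by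
`36 k²` leaves `(28 log (27/4) + (9 log 9 - 8 log 8) + 2 (21 log 21 - 14 log 14 - 7 log 7)) / 36`,
which is `log (81/8)` because `(27/4)^28 (9^9/8^8) (21^21/(14^14 7^7))^2 = (81/8)^36`.
-/

open Filter Real Topology
open scoped Nat

lemma tendsto_apply_mul_div_of_tendsto_div {f : ℕ → ℝ}
    (hf : Tendsto (fun n : ℕ => f n / n) atTop (𝓝 0)) (a : ℕ) :
    Tendsto (fun k : ℕ => f (a * k) / k) atTop (𝓝 0) := by
  rcases Nat.eq_zero_or_pos a with rfl | ha
  · simpa using tendsto_const_div_atTop_nhds_zero_nat (f 0)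
  have hmul : Tendsto (fun k : ℕ => a * k) atTop atTop := tendsto_id.const_mul_atTop' ha
  have hscaled := (hf.comp hmul).const_mul (a : ℝ)
  rw [mul_zero] at hscaled
  refine hscaled.congr' ?_
  filter_upwards [eventually_ne_atTop 0] with k hk
  simp only [Function.comp_apply, Nat.cast_mul]
  field_simp

lemma tendsto_log_factorial_sub_div :
    Tendsto (fun n : ℕ => (log n ! - (n * log n - n)) / n) atTop (𝓝 0) := by
  have hseq : Tendsto (fun n : ℕ => log (Stirling.stirlingSeq n) / n) atTop (𝓝 0) :=
    ((continuousAt_log (by positivity)).tendsto.comp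
      Stirling.tendsto_stirlingSeq_sqrt_pi).div_atTop tendsto_natCast_atTop_atTop
  have hlog : Tendsto (fun n : ℕ => log (2 * n) / n) atTop (𝓝 0) := by
    refine ((tendsto_pow_log_div_mul_add_atTop (1 / 2) 0 1 (by norm_num)).comp
      (tendsto_natCast_atTop_atTop.const_mul_atTop two_pos)).congr fun n => ?_
    simp only [Function.comp_apply]
    ring_nf
  have hsum := hseq.add (hlog.const_mul (1 / 2))
  rw [mul_zero, add_zero] at hsum
  refine hsum.congr' ?_
  filter_upwards [eventually_ne_atTop 0] with n hn
  rw [Stirling.log_stirlingSeq_formula, log_div (by positivity) (exp_pos 1).ne', log_exp]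
  field_simp
  ring

lemma tendsto_log_choose_mul_div {a b : ℕ} (hba : b ≤ a) :
    Tendsto (fun k : ℕ => log ((a * k).choose (b * k)) / k) atTop
      (𝓝 (a * log a - b * log b - (a - b) * log (a - b))) := by
  obtain ⟨c, rfl⟩ := Nat.exists_eq_add_of_le hba
  have hE := tendsto_apply_mul_div_of_tendsto_div tendsto_log_factorial_sub_div
  have herr := (((hE (b + c)).sub (hE b)).sub (hE c)).const_add
    (negMulLog b + negMulLog c - negMulLog (b + c))
  simp only [sub_self, add_zero] at herr
  have hL : ((b + c : ℕ) : ℝ) * log ((b + c : ℕ) : ℝ) - b * log b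
      - ((b + c : ℕ) - b : ℝ) * log ((b + c : ℕ) - b : ℝ)
      = negMulLog b + negMulLog c - negMulLog (b + c) := by
    simp only [negMulLog]
    push_cast
    ring_nf
  rw [hL]
  refine herr.congr' ?_
  filter_upwards [eventually_ne_atTop 0] with k hk
  have hsub : (b + c) * k - b * k = c * k := by rw [add_mul, Nat.add_sub_cancel_left]
  have hfact :
      ((((b + c) * k).choose (b * k) : ℕ) : ℝ) * (b * k)! * (c * k)! = ((b + c) * k)! := by
    rw [← hsub]
    exact_mod_cast Nat.choose_mul_factorial_mul_factorial (by gcongr)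
  have hchoose : ((((b + c) * k).choose (b * k) : ℕ) : ℝ) ≠ 0 :=
    Nat.cast_ne_zero.mpr (Nat.choose_pos (by gcongr)).ne'
  have hlogC : log ((((b + c) * k).choose (b * k) : ℕ) : ℝ)
      = log ((b + c) * k)! - log (b * k)! - log (c * k)! := by
    rw [← hfact, log_mul (by positivity) (by positivity), log_mul hchoose (by positivity)]
    ring
  -- the `negMulLog k` terms cancel because `(b + c) - b - c = 0`
  have hmul_log : ∀ x y : ℝ, x * y * log (x * y) = -(y * negMulLog x + x * negMulLog y) := by
    intro x y
    rw [← negMulLog_mul, negMulLog, neg_mul, neg_neg]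
  rw [hlogC]
  push_cast
  rw [hmul_log, hmul_log, hmul_log]
  field_simp
  ring

lemma tendsto_log_choose_pred_mul_div {a b : ℕ} (hb : 0 < b) (hba : b ≤ a) :
    Tendsto (fun k : ℕ => log ((a * k - 1).choose (b * k - 1)) / k) atTop
      (𝓝 (a * log a - b * log b - (a - b) * log (a - b))) := by
  have hlim := (tendsto_log_choose_mul_div hba).add
    (tendsto_const_div_atTop_nhds_zero_nat (log b - log a))
  rw [add_zero] at hlim
  refine hlim.congr' ?_
  filter_upwards [eventually_ne_atTop 0] with k hk
  have hbak : b * k ≤ a * k := by gcongr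
  have hbk : 0 < b * k := by positivity
  have hak : 0 < a * k := hbk.trans_le hbak
  have hid : ((a * k : ℕ) : ℝ) * ((a * k - 1).choose (b * k - 1) : ℕ)
      = ((a * k).choose (b * k) : ℕ) * ((b * k : ℕ) : ℝ) := by
    have hnat := Nat.add_one_mul_choose_eq (a * k - 1) (b * k - 1)
    rw [Nat.sub_add_cancel hak, Nat.sub_add_cancel hbk] at hnat
    exact_mod_cast hnat
  have hpos : ∀ {n m : ℕ}, m ≤ n → ((n.choose m : ℕ) : ℝ) ≠ 0 :=
    fun h => Nat.cast_ne_zero.mpr (Nat.choose_pos h).ne'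
  have hlog := congrArg log hid
  rw [log_mul (by positivity) (hpos (by omega)), log_mul (hpos hbak) (by positivity)] at hlog
  push_cast at hlog
  have ha : (a : ℝ) ≠ 0 := by have : 0 < a := hb.trans_le hba; positivity
  rw [log_mul ha (by positivity), log_mul (by positivity) (by positivity)] at hlog
  field_simp
  linarith

lemma tendsto_log_div_of_tendsto_rpow_one_div {θ : ℕ → ℝ} (hθpos : ∀ n, 0 < θ n)
    (hθ : Tendsto (fun n : ℕ => θ n ^ (1 / (n : ℝ))) atTop (𝓝 1)) :
    Tendsto (fun n : ℕ => log (θ n) / n) atTop (𝓝 0) := by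
  have hlog := (continuousAt_log one_ne_zero).tendsto.comp hθ
  rw [log_one] at hlog
  refine hlog.congr fun n => ?_
  rw [Function.comp_apply, log_rpow (hθpos n), one_div_mul_eq_div]

lemma log_growth_constant :
    (28 * log (27 / 4) + (9 * log 9 - 8 * log 8) + 2 * (21 * log 21 - 14 * log 14 - 7 * log 7))
      / 36 = log (81 / 8) := by
  have hpow : (27 / 4 : ℝ) ^ 28 * (9 ^ 9 / 8 ^ 8) * (21 ^ 21 / (14 ^ 14 * 7 ^ 7)) ^ 2
      = (81 / 8) ^ 36 := by norm_num
  have hlog := congrArg log hpow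
  simp only [ne_eq, mul_eq_zero, OfNat.ofNat_ne_zero, not_false_eq_true, pow_eq_zero_iff,
    div_eq_zero_iff, or_self, log_mul, log_pow, Nat.cast_ofNat, log_div] at hlog
  rw [log_div (by norm_num) (by norm_num), log_div (by norm_num) (by norm_num)]
  linarith

lemma product_rpow_one_div_eq_exp {k : ℕ} (hk : k ≠ 0) {t c₁ c₂ : ℝ} (ht : 0 < t)
    (hc₁ : 0 < c₁) (hc₂ : 0 < c₂) :
    ((27 / 4 : ℝ) ^ (28 * k ^ 2) * t ^ k * (7 / 8 : ℝ) ^ k * c₁ ^ k * c₂ ^ (2 * k - 1))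
        ^ (1 / (36 * (k : ℝ) ^ 2))
      = exp ((28 * log (27 / 4) + log t / k + log (7 / 8) / k + log c₁ / k
          + (2 - 1 / (k : ℝ)) * (log c₂ / k)) / 36) := by
  rw [rpow_def_of_pos (by positivity)]
  congr 1
  rw [log_mul (by positivity) (by positivity), log_mul (by positivity) (by positivity),
    log_mul (by positivity) (by positivity), log_mul (by positivity) (by positivity)]
  simp only [log_pow]
  push_cast [Nat.cast_sub (show 1 ≤ 2 * k by omega)]
  field_simp

theorem stmt_16 (θ : ℕ → ℝ) (hθpos : ∀ n, 0 < θ n)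
    (hθ : Tendsto (fun n : ℕ => θ n ^ (1 / (n : ℝ))) atTop (nhds 1)) :
    Tendsto (fun k : ℕ =>
        ((27 / 4 : ℝ) ^ (28 * k ^ 2) * θ (14 * k) ^ k * (7 / 8 : ℝ) ^ k *
            (((9 * k - 1).choose (8 * k - 1) : ℝ)) ^ k *
            (((21 * k).choose (14 * k) : ℝ)) ^ (2 * k - 1)) ^ (1 / (36 * (k : ℝ) ^ 2)))
      atTop (nhds (81 / 8)) := by
  have hθ14 : Tendsto (fun k : ℕ => log (θ (14 * k)) / k) atTop (𝓝 0) :=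
    tendsto_apply_mul_div_of_tendsto_div (tendsto_log_div_of_tendsto_rpow_one_div hθpos hθ) 14
  have hchoose₁ := tendsto_log_choose_pred_mul_div (a := 9) (b := 8) (by norm_num) (by norm_num)
  have hchoose₂ := tendsto_log_choose_mul_div (a := 21) (b := 14) (by norm_num)
  have htwo : Tendsto (fun k : ℕ => 2 - 1 / (k : ℝ)) atTop (𝓝 2) := by
    simpa using tendsto_one_div_atTop_nhds_zero_nat.const_sub (2 : ℝ)
  have hexponent : Tendsto (fun k : ℕ => (28 * log (27 / 4) + log (θ (14 * k)) / k
      + log (7 / 8) / k + log ((9 * k - 1).choose (8 * k - 1)) / k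
      + (2 - 1 / (k : ℝ)) * (log ((21 * k).choose (14 * k)) / k)) / 36) atTop
      (𝓝 (log (81 / 8))) := by
    rw [← log_growth_constant]
    convert (((((tendsto_const_nhds.add hθ14).add
      (tendsto_const_div_atTop_nhds_zero_nat (log (7 / 8)))).add hchoose₁).add
      (htwo.mul hchoose₂)).div_const 36) using 2
    norm_num
  have hexp := (continuous_exp.tendsto _).comp hexponent
  rw [exp_log (by norm_num)] at hexp
  refine hexp.congr' ?_
  filter_upwards [eventually_ne_atTop 0] with k hk
  exact (product_rpow_one_div_eq_exp hk (hθpos _) (Nat.cast_pos.mpr (Nat.choose_pos (by omega)))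
    (Nat.cast_pos.mpr (Nat.choose_pos (by omega)))).symm
end
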